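/- arXiv:1403.4111 — 8 statements merged into one kernel-verified Lean document; each statement's English description precedes it below -/
import Mathlib

section
/- For any x ≥ 0, the function h_x(y) = 1 + ∫₀^{min(x,y)} 1/w(s) ds belongs to H_w, and for every g ∈ H_w one has g(x) = ⟨h_x, g⟩_w; i.e., the point evaluation δ_x is a continuous linear functional represented by h_x. -/
open MeasureTheory Set Filter

noncomputable section

/-- Inner product on the Filipović space `H_w`, for functions `g, h` with chosen
(weak) derivatives `g', h'`:  `⟨g,h⟩_w = g(0)h(0) + ∫₀^∞ w g' h'`. -/
def wInner (w g g' h h' : ℝ → ℝ) : ℝ :=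
  g 0 * h 0 + ∫ x in Ioi (0:ℝ), w x * g' x * h' x

/-- Norm on the Filipović space `H_w`. -/
def wNorm (w g g' : ℝ → ℝ) : ℝ := Real.sqrt (wInner w g g' g g')

/-- `w : ℝ≥0 → [1,∞)` continuous, increasing, with `w 0 = 1`. -/
structure IsWeight (w : ℝ → ℝ) : Prop where
  cont : ContinuousOn w (Ici 0)
  mono : MonotoneOn w (Ici 0)
  one_le : ∀ x ∈ Ici (0:ℝ), 1 ≤ w x
  at_zero : w 0 = 1

/-- `g ∈ H_w` with derivative `g'`: `g` is absolutely continuous on `[0,∞)` with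
a.e. derivative `g'`, and `∫₀^∞ w (g')² < ∞`. -/
def MemHw (w g g' : ℝ → ℝ) : Prop :=
  (∀ x ∈ Ici (0:ℝ), g x = g 0 + ∫ t in Ioc (0:ℝ) x, g' t) ∧
  (∀ x ∈ Ici (0:ℝ), IntegrableOn g' (Ioc 0 x)) ∧
  IntegrableOn (fun x => w x * g' x ^ 2) (Ioi 0)

/-- The reproducing kernel `h_x(y) = 1 + ∫₀^{min(x,y)} 1/w(s) ds`. -/
def hker (w : ℝ → ℝ) (x y : ℝ) : ℝ := 1 + ∫ s in Ioc (0:ℝ) (min x y), 1 / w s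

/-- Derivative of `h_x`. -/
def hker' (w : ℝ → ℝ) (x : ℝ) : ℝ → ℝ := (Iic x).indicator (fun s => 1 / w s)

lemma wpos (w : ℝ → ℝ) (hw : IsWeight w) {s : ℝ} (hs : 0 ≤ s) : 0 < w s :=
  lt_of_lt_of_le one_pos (hw.one_le s hs)

lemma invw_aemeas (w : ℝ → ℝ) (hw : IsWeight w) {S : Set ℝ} (hS : S ⊆ Ici 0) :
    AEMeasurable (fun s => 1 / w s) (volume.restrict S) := by
  have hc : ContinuousOn (fun s => 1 / w s) (Ici 0) := by
    apply ContinuousOn.div continuousOn_const hw.cont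
    intro s hs; exact (wpos w hw hs).ne'
  exact (hc.aemeasurable measurableSet_Ici).mono_measure
    (Measure.restrict_mono hS le_rfl)

/-- `h_x ∈ H_w` and `g(x) = ⟨h_x, g⟩_w` for every `g ∈ H_w`. -/
theorem stmt0 (w : ℝ → ℝ) (hw : IsWeight w) (x : ℝ) (hx : 0 ≤ x) :
    MemHw w (hker w x) (hker' w x) ∧
    ∀ g g' : ℝ → ℝ, MemHw w g g' → g x = wInner w (hker w x) (hker' w x) g g' := by
  have hk0 : hker w x 0 = 1 := by
    simp [hker, min_eq_right hx]
  constructor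
  · refine ⟨?_, ?_, ?_⟩
    · intro y hy
      rw [hk0]
      have : ∫ t in Ioc (0:ℝ) y, hker' w x t = ∫ s in Ioc (0:ℝ) (min x y), 1 / w s := by
        rw [hker', setIntegral_indicator measurableSet_Iic, Ioc_inter_Iic]
        simp [min_comm]
      rw [this, hker]
    · intro y hy
      refine ⟨?_, ?_⟩
      · exact ((invw_aemeas w hw (Ioc_subset_Icc_self.trans Icc_subset_Ici_self)).indicator
          measurableSet_Iic).aestronglyMeasurable
      · apply HasFiniteIntegral.restrict_of_bounded (C := 1) measure_Ioc_lt_top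
        filter_upwards [ae_restrict_mem measurableSet_Ioc] with s hs
        rw [hker']
        by_cases h : s ∈ Iic x
        · rw [indicator_of_mem h]
          have h1 := hw.one_le s (le_of_lt hs.1)
          rw [Real.norm_eq_abs, abs_of_nonneg (by positivity)]
          rw [div_le_one (by linarith)]; linarith
        · rw [indicator_of_notMem h]; simp
    · have heq : (fun s => w s * hker' w x s ^ 2)
          = (Iic x).indicator (fun s => w s * (1 / w s) ^ 2) := by
        funext s
        rw [hker']
        by_cases h : s ∈ Iic x
        · rw [indicator_of_mem h, indicator_of_mem h]
        · rw [indicator_of_notMem h, indicator_of_notMem h]; simp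
      rw [heq, IntegrableOn, integrable_indicator_iff measurableSet_Iic]
      rw [IntegrableOn, Measure.restrict_restrict measurableSet_Iic]
      have : Iic x ∩ Ioi 0 = Ioc 0 x := by ext s; simp [and_comm]
      rw [this]
      refine ⟨?_, ?_⟩
      · have hm : AEMeasurable w (volume.restrict (Ioc (0:ℝ) x)) :=
          (hw.cont.aemeasurable measurableSet_Ici).mono_measure
            (Measure.restrict_mono (Ioc_subset_Icc_self.trans Icc_subset_Ici_self) le_rfl)
        exact (hm.mul (((invw_aemeas w hw
          (Ioc_subset_Icc_self.trans Icc_subset_Ici_self)).pow_const 2))).aestronglyMeasurable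
      · apply HasFiniteIntegral.restrict_of_bounded (C := 1) measure_Ioc_lt_top
        filter_upwards [ae_restrict_mem measurableSet_Ioc] with s hs
        have h1 := hw.one_le s (le_of_lt hs.1)
        have hp : 0 < w s := by linarith
        have : w s * (1 / w s) ^ 2 = 1 / w s := by field_simp
        rw [this, Real.norm_eq_abs, abs_of_nonneg (by positivity), div_le_one hp]
        linarith
  · rintro g g' ⟨hAC, hInt, _⟩
    rw [wInner, hk0, one_mul]
    have : ∫ s in Ioi (0:ℝ), w s * hker' w x s * g' s = ∫ s in Ioc (0:ℝ) x, g' s := by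
      have heq : (fun s => w s * hker' w x s * g' s)
          = (Iic x).indicator (fun s => w s * (1 / w s) * g' s) := by
        funext s
        rw [hker']
        by_cases h : s ∈ Iic x
        · rw [indicator_of_mem h, indicator_of_mem h]
        · rw [indicator_of_notMem h, indicator_of_notMem h]; simp
      rw [heq, setIntegral_indicator measurableSet_Iic]
      have h2 : Ioi (0:ℝ) ∩ Iic x = Ioc 0 x := by ext s; simp [Ioc]
      rw [h2]
      apply setIntegral_congr_fun measurableSet_Ioc
      intro s hs
      have hp : 0 < w s := wpos w hw (le_of_lt hs.1)
      field_simp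
    rw [this, ← hAC x hx]
end
end

section
/- The operator norm of the point evaluation functional δ_x : H_w → ℝ, g ↦ g(x), equals √(1 + ∫₀^x 1/w(s) ds), i.e., ‖δ_x‖²_op = h_x(x). -/
open MeasureTheory Set Filter

noncomputable section

/-!
`h_x` is the reproducing kernel of `H_w`: since `w · h_x' = 1_{[0,x]}`, the inner product
`⟨g, h_x⟩_w` equals `g(0) + ∫₀^x g' = g(x)`, and in particular `‖h_x‖_w² = h_x(x)`.
Cauchy–Schwarz then gives `|g(x)| ≤ ‖g‖_w √(h_x(x))`, with equality for `g = h_x / √(h_x(x))`.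
-/

theorem sq_integral_weight_mul_le {α : Type*} [MeasurableSpace α] {μ : Measure α}
    {w F G : α → ℝ} (hw : 0 ≤ᵐ[μ] w) (hF : Integrable (fun t => w t * F t ^ 2) μ)
    (hG : Integrable (fun t => w t * G t ^ 2) μ) (hFG : Integrable (fun t => w t * F t * G t) μ) :
    (∫ t, w t * F t * G t ∂μ) ^ 2 ≤ (∫ t, w t * F t ^ 2 ∂μ) * ∫ t, w t * G t ^ 2 ∂μ := by
  have quadratic_nonneg : ∀ r : ℝ, 0 ≤ (∫ t, w t * F t ^ 2 ∂μ) * (r * r) +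
      2 * (∫ t, w t * F t * G t ∂μ) * r + ∫ t, w t * G t ^ 2 ∂μ := by
    intro r
    have hFFG : Integrable (fun t => r ^ 2 * (w t * F t ^ 2) + 2 * r * (w t * F t * G t)) μ :=
      (hF.const_mul _).add (hFG.const_mul _)
    have hexpand : (fun t => w t * (r * F t + G t) ^ 2) =
        fun t => (r ^ 2 * (w t * F t ^ 2) + 2 * r * (w t * F t * G t)) + w t * G t ^ 2 := by
      funext t; ring
    have hnonneg : 0 ≤ ∫ t, w t * (r * F t + G t) ^ 2 ∂μ :=
      integral_nonneg_of_ae (hw.mono fun t ht => mul_nonneg ht (sq_nonneg _))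
    rw [hexpand, integral_add hFFG hG, integral_add (hF.const_mul _) (hFG.const_mul _),
      integral_const_mul, integral_const_mul] at hnonneg
    linarith
  have := discrim_le_zero quadratic_nonneg
  rw [discrim] at this
  linarith

theorem sq_mul_add_le_of_sq_le_mul {a b B P Q : ℝ} (hB : B ^ 2 ≤ P * Q) (hP : 0 ≤ P)
    (hQ : 0 ≤ Q) : (a * b + B) ^ 2 ≤ (a ^ 2 + P) * (b ^ 2 + Q) := by
  have hsq : (2 * a * b * B) ^ 2 ≤ (a ^ 2 * Q + b ^ 2 * P) ^ 2 := by
    nlinarith [sq_nonneg (a ^ 2 * Q - b ^ 2 * P), mul_le_mul_of_nonneg_left hB (sq_nonneg (a * b))]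
  have hcross : 2 * a * b * B ≤ a ^ 2 * Q + b ^ 2 * P :=
    (le_abs_self _).trans (abs_le_of_sq_le_sq hsq (by positivity))
  nlinarith

theorem hker_zero (w : ℝ → ℝ) (x : ℝ) : hker w x 0 = 1 := by
  simp [hker]

theorem hker_eq_add_integral_hker' (w : ℝ → ℝ) (x y : ℝ) :
    hker w x y = hker w x 0 + ∫ t in Ioc 0 y, hker' w x t := by
  rw [hker_zero, hker, hker', setIntegral_indicator measurableSet_Iic, Ioc_inter_Iic, min_comm]

theorem weight_mul_mul_hker' {w : ℝ → ℝ} {s : ℝ} (hs : w s ≠ 0) (x : ℝ) (f : ℝ → ℝ) :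
    w s * f s * hker' w x s = (Iic x).indicator f s := by
  by_cases hsx : s ∈ Iic x
  · simp only [hker', indicator_of_mem hsx]
    field_simp
  · simp [hker', indicator_of_notMem hsx]

theorem setIntegral_weight_mul_mul_hker' {w : ℝ → ℝ} (hw : ∀ s ∈ Ioi (0 : ℝ), w s ≠ 0)
    (x : ℝ) (f : ℝ → ℝ) :
    ∫ s in Ioi 0, w s * f s * hker' w x s = ∫ s in Ioc 0 x, f s := by
  rw [setIntegral_congr_fun measurableSet_Ioi fun s hs => weight_mul_mul_hker' (hw s hs) x f,
    setIntegral_indicator measurableSet_Iic, Ioi_inter_Iic]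

theorem integrableOn_weight_mul_mul_hker' {w f : ℝ → ℝ} (hw : ∀ s ∈ Ioi (0 : ℝ), w s ≠ 0)
    {x : ℝ} (hf : IntegrableOn f (Ioc 0 x)) :
    IntegrableOn (fun s => w s * f s * hker' w x s) (Ioi 0) := by
  refine IntegrableOn.congr_fun ?_ (fun s hs => (weight_mul_mul_hker' (hw s hs) x f).symm)
    measurableSet_Ioi
  rw [IntegrableOn, integrable_indicator_iff measurableSet_Iic, IntegrableOn,
    Measure.restrict_restrict measurableSet_Iic, Iic_inter_Ioi]
  exact hf

theorem wInner_hker {w g g' : ℝ → ℝ} (hw : ∀ s ∈ Ioi (0 : ℝ), w s ≠ 0) {x : ℝ}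
    (hg : g x = g 0 + ∫ t in Ioc 0 x, g' t) :
    wInner w g g' (hker w x) (hker' w x) = g x := by
  rw [wInner, hker_zero, mul_one, setIntegral_weight_mul_mul_hker' hw, hg]

theorem wInner_hker_self {w : ℝ → ℝ} (hw : ∀ s ∈ Ioi (0 : ℝ), w s ≠ 0) (x : ℝ) :
    wInner w (hker w x) (hker' w x) (hker w x) (hker' w x) = hker w x x :=
  wInner_hker hw (hker_eq_add_integral_hker' w x x)

theorem MemHw.const_mul {w g g' : ℝ → ℝ} (hg : MemHw w g g') (c : ℝ) :
    MemHw w (fun y => c * g y) (fun y => c * g' y) := by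
  obtain ⟨hfund, hint, hsq⟩ := hg
  refine ⟨fun y hy => ?_, fun y hy => (hint y hy).const_mul c, ?_⟩
  · show c * g y = c * g 0 + ∫ t in Ioc 0 y, c * g' t
    rw [integral_const_mul, hfund y hy, mul_add]
  · have := hsq.const_mul (c ^ 2)
    simp only [mul_pow, mul_left_comm (w _)] at this ⊢
    exact this

theorem wInner_self (w g g' : ℝ → ℝ) :
    wInner w g g' g g' = g 0 ^ 2 + ∫ s in Ioi 0, w s * g' s ^ 2 := by
  simp only [wInner, sq, mul_assoc]

theorem wNorm_const_mul (w g g' : ℝ → ℝ) (c : ℝ) :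
    wNorm w (fun y => c * g y) (fun y => c * g' y) = |c| * wNorm w g g' := by
  have hscale : wInner w (fun y => c * g y) (fun y => c * g' y) (fun y => c * g y)
      (fun y => c * g' y) = c ^ 2 * wInner w g g' g g' := by
    simp only [wInner_self, mul_pow, mul_left_comm (w _), integral_const_mul, mul_add]
  rw [wNorm, wNorm, hscale, Real.sqrt_mul (sq_nonneg c), Real.sqrt_sq_eq_abs]

theorem wInner_self_nonneg {w : ℝ → ℝ} (hw : ∀ s ∈ Ioi (0 : ℝ), 0 ≤ w s) (g g' : ℝ → ℝ) :
    0 ≤ wInner w g g' g g' := by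
  rw [wInner_self]
  exact add_nonneg (sq_nonneg _) (setIntegral_nonneg measurableSet_Ioi fun s hs =>
    mul_nonneg (hw s hs) (sq_nonneg _))

theorem sq_wInner_le {w g g' h h' : ℝ → ℝ} (hw : ∀ s ∈ Ioi (0 : ℝ), 0 ≤ w s)
    (hg : IntegrableOn (fun s => w s * g' s ^ 2) (Ioi 0))
    (hh : IntegrableOn (fun s => w s * h' s ^ 2) (Ioi 0))
    (hgh : IntegrableOn (fun s => w s * g' s * h' s) (Ioi 0)) :
    wInner w g g' h h' ^ 2 ≤ wInner w g g' g g' * wInner w h h' h h' := by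
  have hw_ae : 0 ≤ᵐ[volume.restrict (Ioi 0)] w :=
    (ae_restrict_mem measurableSet_Ioi).mono hw
  rw [wInner, wInner_self, wInner_self]
  exact sq_mul_add_le_of_sq_le_mul (sq_integral_weight_mul_le hw_ae hg hh hgh)
    (setIntegral_nonneg measurableSet_Ioi fun s hs => mul_nonneg (hw s hs) (sq_nonneg _))
    (setIntegral_nonneg measurableSet_Ioi fun s hs => mul_nonneg (hw s hs) (sq_nonneg _))

namespace IsWeight

variable {w : ℝ → ℝ}

theorem pos (hw : IsWeight w) {s : ℝ} (hs : 0 ≤ s) : 0 < w s :=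
  one_pos.trans_le (hw.one_le s hs)

theorem integrableOn_one_div (hw : IsWeight w) (y : ℝ) :
    IntegrableOn (fun s => 1 / w s) (Ioc 0 y) :=
  ((continuousOn_const.div hw.cont fun _ hs => (hw.pos hs).ne').mono
    Icc_subset_Ici_self |>.integrableOn_Icc).mono_set Ioc_subset_Icc_self

theorem ne_zero (hw : IsWeight w) {s : ℝ} (hs : s ∈ Ioi (0 : ℝ)) : w s ≠ 0 :=
  (hw.pos (le_of_lt hs)).ne'

theorem one_le_hker (hw : IsWeight w) (x y : ℝ) : 1 ≤ hker w x y :=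
  le_add_of_nonneg_right <| setIntegral_nonneg measurableSet_Ioc fun _ hs =>
    one_div_nonneg.2 (hw.pos hs.1.le).le

theorem integrableOn_hker' (hw : IsWeight w) (x y : ℝ) : IntegrableOn (hker' w x) (Ioc 0 y) :=
  (hw.integrableOn_one_div y).indicator measurableSet_Iic

theorem memHw_hker (hw : IsWeight w) (x : ℝ) : MemHw w (hker w x) (hker' w x) := by
  refine ⟨fun y _ => hker_eq_add_integral_hker' w x y, fun y _ => hw.integrableOn_hker' x y, ?_⟩
  exact (integrableOn_weight_mul_mul_hker' (fun _ => hw.ne_zero)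
    (hw.integrableOn_hker' x x)).congr_fun (fun _ _ => by ring) measurableSet_Ioi

theorem abs_apply_le_wNorm_mul {g g' : ℝ → ℝ} (hw : IsWeight w)
    (hg : MemHw w g g') {x : ℝ} (hx : 0 ≤ x) :
    |g x| ≤ wNorm w g g' * Real.sqrt (hker w x x) := by
  have hw0 : ∀ s ∈ Ioi (0 : ℝ), 0 ≤ w s := fun _ hs => (hw.pos (le_of_lt hs)).le
  have hw0' : ∀ s ∈ Ioi (0 : ℝ), w s ≠ 0 := fun _ => hw.ne_zero
  obtain ⟨hfund, hint, hsq⟩ := hg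
  have hCS := sq_wInner_le (g := g) (h := hker w x) hw0 hsq (hw.memHw_hker x).2.2
    (integrableOn_weight_mul_mul_hker' hw0' (hint x hx))
  rw [wInner_hker hw0' (hfund x hx), wInner_hker_self hw0'] at hCS
  rw [wNorm, ← Real.sqrt_mul (wInner_self_nonneg hw0 g g')]
  exact Real.abs_le_sqrt hCS

end IsWeight

/-- the operator norm of the point evaluation `δ_x` equals
`√(h_x(x)) = √(1 + ∫₀^x 1/w)`; i.e. it is the greatest value of `|g x|`
over the unit ball of `H_w` (attained). -/
theorem stmt1 (w : ℝ → ℝ) (hw : IsWeight w) (x : ℝ) (hx : 0 ≤ x) :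
    IsGreatest {r : ℝ | ∃ g g' : ℝ → ℝ, MemHw w g g' ∧ wNorm w g g' ≤ 1 ∧ r = |g x|}
      (Real.sqrt (hker w x x)) := by
  have hnorm_pos : 0 < Real.sqrt (hker w x x) :=
    Real.sqrt_pos.2 (one_pos.trans_le (hw.one_le_hker x x))
  set c := (Real.sqrt (hker w x x))⁻¹
  constructor
  · refine ⟨fun y => c * hker w x y, fun y => c * hker' w x y, (hw.memHw_hker x).const_mul c,
      ?_, ?_⟩
    · rw [wNorm_const_mul, wNorm, wInner_hker_self (fun _ => hw.ne_zero),
        abs_of_pos (inv_pos.2 hnorm_pos), inv_mul_cancel₀ hnorm_pos.ne']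
    · show _ = |c * hker w x x|
      rw [inv_mul_eq_div, Real.div_sqrt, abs_of_pos hnorm_pos]
  · rintro _ ⟨g, g', hg, hnorm, rfl⟩
    calc |g x| ≤ wNorm w g g' * Real.sqrt (hker w x x) := hw.abs_apply_le_wNorm_mul hg hx
      _ ≤ Real.sqrt (hker w x x) := mul_le_of_le_one_left hnorm_pos.le hnorm
end
end

section
/- If ∫₀^∞ 1/w(x) dx < ∞, then every g ∈ H_w is bounded with sup_{x≥0} |g(x)| ≤ c ‖g‖_w where c = √(1 + ∫₀^∞ 1/w(x) dx). Moreover the function h_∞(x) = 1 + ∫₀^x 1/w(s) ds belongs to H_w and lim_{x→∞} g(x) = ⟨h_∞, g⟩_w for every g ∈ H_w. -/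
open MeasureTheory Set Filter

noncomputable section

/-!
Writing `|g'| = w^{-1/2} · w^{1/2} |g'|`, Cauchy–Schwarz gives `∫₀^x |g'| ≤ √K √E` with
`K = ∫₀^∞ 1/w` and `E = ∫₀^∞ w g'²`. Hence `|g(x)| ≤ |g(0)| + √K √E`, and Cauchy–Schwarz in `ℝ²`
bounds this by `√(1 + K) · √(g(0)² + E) = √(1 + K) ‖g‖_w`. The same estimate
makes `g'` integrable on `(0, ∞)`, so `g(x) → g(0) + ∫₀^∞ g'`, and this is `⟨h_∞, g⟩_w` because
`w · h_∞' = 1`.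
-/

lemma mul_add_mul_le_sqrt_mul_sqrt (a b c d : ℝ) :
    a * b + c * d ≤ √(a ^ 2 + c ^ 2) * √(b ^ 2 + d ^ 2) := by
  rw [← Real.sqrt_mul (by positivity)]
  exact Real.le_sqrt_of_sq_le (by nlinarith [sq_nonneg (a * d - b * c)])

section CauchySchwarz

variable {α : Type*} [MeasurableSpace α] {μ : Measure α}

theorem integral_mul_le_sqrt_mul_sqrt_of_nonneg {u v : α → ℝ} (hu : 0 ≤ᵐ[μ] u) (hv : 0 ≤ᵐ[μ] v)
    (hu2 : MemLp u 2 μ) (hv2 : MemLp v 2 μ) :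
    ∫ x, u x * v x ∂μ ≤ √(∫ x, u x ^ 2 ∂μ) * √(∫ x, v x ^ 2 ∂μ) := by
  have h2 : ENNReal.ofReal 2 = 2 := by norm_num
  have := integral_mul_le_Lp_mul_Lq_of_nonneg Real.HolderConjugate.two_two hu hv
    (by rwa [h2]) (by rwa [h2])
  simpa only [Real.rpow_two, ← Real.sqrt_eq_rpow] using this

theorem integral_abs_le_sqrt_integral_inv_mul_sqrt_integral_mul_sq {w f : α → ℝ}
    (hw : ∀ᵐ x ∂μ, 0 < w x) (hinv : Integrable (fun x => 1 / w x) μ)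
    (hf : Integrable (fun x => w x * f x ^ 2) μ) :
    ∫ x, |f x| ∂μ ≤ √(∫ x, 1 / w x ∂μ) * √(∫ x, w x * f x ^ 2 ∂μ) := by
  have hsq_inv : (fun x => √(1 / w x) ^ 2) =ᵐ[μ] fun x => 1 / w x := by
    filter_upwards [hw] with x hx using Real.sq_sqrt (by positivity)
  have hsq_f : (fun x => √(w x * f x ^ 2) ^ 2) =ᵐ[μ] fun x => w x * f x ^ 2 := by
    filter_upwards [hw] with x hx using Real.sq_sqrt (by positivity)
  have hsplit : (fun x => |f x|) =ᵐ[μ] fun x => √(1 / w x) * √(w x * f x ^ 2) := by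
    filter_upwards [hw] with x hx
    have hcancel : 1 / w x * (w x * f x ^ 2) = f x ^ 2 := by field_simp
    rw [← Real.sqrt_mul (by positivity), hcancel, Real.sqrt_sq_eq_abs]
  have hmemLp {h : α → ℝ} (hh : Integrable h μ) (hsq : (fun x => √(h x) ^ 2) =ᵐ[μ] h) :
      MemLp (fun x => √(h x)) 2 μ :=
    (memLp_two_iff_integrable_sq
      (Real.continuous_sqrt.comp_aestronglyMeasurable hh.aestronglyMeasurable)).2
      (hh.congr hsq.symm)
  calc ∫ x, |f x| ∂μ = ∫ x, √(1 / w x) * √(w x * f x ^ 2) ∂μ := integral_congr_ae hsplit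
    _ ≤ √(∫ x, √(1 / w x) ^ 2 ∂μ) * √(∫ x, √(w x * f x ^ 2) ^ 2 ∂μ) :=
      integral_mul_le_sqrt_mul_sqrt_of_nonneg (ae_of_all _ fun _ => Real.sqrt_nonneg _)
        (ae_of_all _ fun _ => Real.sqrt_nonneg _) (hmemLp hinv hsq_inv) (hmemLp hf hsq_f)
    _ = √(∫ x, 1 / w x ∂μ) * √(∫ x, w x * f x ^ 2 ∂μ) := by
      rw [integral_congr_ae hsq_inv, integral_congr_ae hsq_f]

end CauchySchwarz

lemma IsWeight.ae_pos {w : ℝ → ℝ} (hw : IsWeight w) : ∀ᵐ x ∂volume.restrict (Ioi 0), 0 < w x := by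
  filter_upwards [ae_restrict_mem measurableSet_Ioi] with x hx
  exact one_pos.trans_le (hw.one_le x (mem_Ici.2 hx.out.le))

lemma IsWeight.ae_inv_nonneg {w : ℝ → ℝ} (hw : IsWeight w) :
    0 ≤ᵐ[volume.restrict (Ioi 0)] fun x => 1 / w x := by
  filter_upwards [hw.ae_pos] with x hx using by positivity

lemma IsWeight.ae_mul_sq_nonneg {w : ℝ → ℝ} (hw : IsWeight w) (f : ℝ → ℝ) :
    0 ≤ᵐ[volume.restrict (Ioi 0)] fun x => w x * f x ^ 2 := by
  filter_upwards [hw.ae_pos] with x hx using by positivity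

lemma wNorm_eq_sqrt (w g g' : ℝ → ℝ) :
    wNorm w g g' = √(g 0 ^ 2 + ∫ x in Ioi 0, w x * g' x ^ 2) := by
  simp only [wNorm, wInner, mul_assoc, ← sq]

namespace MemHw

variable {w g g' : ℝ → ℝ}

lemma integral_abs_deriv_le (hg : MemHw w g g') (hw : IsWeight w)
    (hk : IntegrableOn (fun x => 1 / w x) (Ioi 0)) (x : ℝ) :
    ∫ t in Ioc 0 x, |g' t| ≤
      √(∫ t in Ioi 0, 1 / w t) * √(∫ t in Ioi 0, w t * g' t ^ 2) := by
  have hsub : Ioc 0 x ⊆ Ioi (0 : ℝ) := Ioc_subset_Ioi_self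
  have hpos : ∀ᵐ t ∂volume.restrict (Ioc 0 x), 0 < w t :=
    ae_restrict_of_ae_restrict_of_subset hsub hw.ae_pos
  calc ∫ t in Ioc 0 x, |g' t|
      ≤ √(∫ t in Ioc 0 x, 1 / w t) * √(∫ t in Ioc 0 x, w t * g' t ^ 2) :=
        integral_abs_le_sqrt_integral_inv_mul_sqrt_integral_mul_sq hpos (hk.mono_set hsub)
          (hg.2.2.mono_set hsub)
    _ ≤ √(∫ t in Ioi 0, 1 / w t) * √(∫ t in Ioi 0, w t * g' t ^ 2) := by
      gcongr √?_ * √?_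
      · exact setIntegral_mono_set hk hw.ae_inv_nonneg hsub.eventuallyLE
      · exact setIntegral_mono_set hg.2.2 (hw.ae_mul_sq_nonneg g') hsub.eventuallyLE

lemma integrableOn_Ioi (hg : MemHw w g g') (hw : IsWeight w)
    (hk : IntegrableOn (fun x => 1 / w x) (Ioi 0)) : IntegrableOn g' (Ioi 0) :=
  integrableOn_Ioi_of_intervalIntegral_norm_bounded _ 0
    (fun n : ℕ => hg.2.1 n (mem_Ici.2 n.cast_nonneg)) tendsto_natCast_atTop_atTop <|
    Eventually.of_forall fun n => by
      rw [intervalIntegral.integral_of_le n.cast_nonneg]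
      exact hg.integral_abs_deriv_le hw hk n

lemma abs_le_sqrt_mul_wNorm (hg : MemHw w g g') (hw : IsWeight w)
    (hk : IntegrableOn (fun x => 1 / w x) (Ioi 0)) {x : ℝ} (hx : x ∈ Ici 0) :
    |g x| ≤ √(1 + ∫ s in Ioi 0, 1 / w s) * wNorm w g g' := by
  set K := ∫ s in Ioi 0, 1 / w s
  set E := ∫ t in Ioi 0, w t * g' t ^ 2
  calc |g x| = |g 0 + ∫ t in Ioc 0 x, g' t| := by rw [← hg.1 x hx]
    _ ≤ |g 0| + ∫ t in Ioc 0 x, |g' t| :=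
      (abs_add_le _ _).trans (by gcongr; exact abs_integral_le_integral_abs)
    _ ≤ 1 * |g 0| + √K * √E := by linarith [hg.integral_abs_deriv_le hw hk x]
    _ ≤ √(1 ^ 2 + √K ^ 2) * √(|g 0| ^ 2 + √E ^ 2) := mul_add_mul_le_sqrt_mul_sqrt _ _ _ _
    _ = √(1 + K) * wNorm w g g' := by
      rw [Real.sq_sqrt (integral_nonneg_of_ae hw.ae_inv_nonneg),
        Real.sq_sqrt (integral_nonneg_of_ae (hw.ae_mul_sq_nonneg g')), sq_abs, one_pow,
        wNorm_eq_sqrt]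

lemma tendsto_atTop (hg : MemHw w g g') (hint : IntegrableOn g' (Ioi 0)) :
    Tendsto g atTop (nhds (g 0 + ∫ t in Ioi 0, g' t)) := by
  refine (tendsto_const_nhds.add
    (intervalIntegral_tendsto_integral_Ioi 0 hint tendsto_id)).congr' ?_
  filter_upwards [eventually_ge_atTop 0] with x hx
  rw [id, intervalIntegral.integral_of_le hx, ← hg.1 x hx]

end MemHw

lemma memHw_one_add_integral_inv {w : ℝ → ℝ} (hw : IsWeight w)
    (hk : IntegrableOn (fun x => 1 / w x) (Ioi 0)) :
    MemHw w (fun x => 1 + ∫ s in Ioc 0 x, 1 / w s) (fun s => 1 / w s) := by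
  refine ⟨fun x _ => by simp, fun x _ => hk.mono_set Ioc_subset_Ioi_self, hk.congr ?_⟩
  filter_upwards [hw.ae_pos] with x hx
  field_simp

lemma wInner_one_add_integral_inv {w : ℝ → ℝ} (hw : IsWeight w) (g g' : ℝ → ℝ) :
    wInner w (fun x => 1 + ∫ s in Ioc 0 x, 1 / w s) (fun s => 1 / w s) g g' =
      g 0 + ∫ t in Ioi 0, g' t := by
  have hcancel : ∫ x in Ioi 0, w x * (1 / w x) * g' x = ∫ t in Ioi 0, g' t :=
    integral_congr_ae <| by
      filter_upwards [hw.ae_pos] with x hx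
      rw [mul_one_div_cancel hx.ne', one_mul]
  rw [wInner, hcancel, Ioc_self, Measure.restrict_empty, integral_zero_measure, add_zero,
    one_mul]

/-- if `∫₀^∞ 1/w < ∞` then every `g ∈ H_w` satisfies
`|g(x)| ≤ c ‖g‖_w` with `c = √(1 + ∫₀^∞ 1/w)`, the function
`h_∞(x) = 1 + ∫₀^x 1/w` belongs to `H_w`, and `g(x) → ⟨h_∞, g⟩_w` as `x → ∞`. -/
theorem stmt2 (w : ℝ → ℝ) (hw : IsWeight w)
    (hk : IntegrableOn (fun x => 1 / w x) (Ioi 0)) :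
    (∀ g g' : ℝ → ℝ, MemHw w g g' → ∀ x ∈ Ici (0:ℝ),
      |g x| ≤ Real.sqrt (1 + ∫ s in Ioi (0:ℝ), 1 / w s) * wNorm w g g') ∧
    MemHw w (fun x => 1 + ∫ s in Ioc (0:ℝ) x, 1 / w s) (fun s => 1 / w s) ∧
    (∀ g g' : ℝ → ℝ, MemHw w g g' →
      Tendsto g atTop
        (nhds (wInner w (fun x => 1 + ∫ s in Ioc (0:ℝ) x, 1 / w s) (fun s => 1 / w s) g g'))) := by
  refine ⟨fun g g' hg x hx => hg.abs_le_sqrt_mul_wNorm hw hk hx,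
    memHw_one_add_integral_inv hw hk, fun g g' hg => ?_⟩
  rw [wInner_one_add_integral_inv hw]
  exact hg.tendsto_atTop (hg.integrableOn_Ioi hw hk)
end
end

section
/- The map h : ℝ≥0 → H_w, x ↦ h_x (where h_x(y) = 1 + ∫₀^{min(x,y)} 1/w(s) ds) is 1/2-Hölder continuous with constant 1: ‖h_y − h_x‖_w ≤ √(y−x) for 0 ≤ x ≤ y. Moreover the lower bound ‖h_y − h_x‖_w ≥ √((y−x)/w(y)) holds. -/
open MeasureTheory Set Filter

noncomputable section

/-! The derivative of `h_y - h_x` is `1/w` on `(x, y]` and zero elsewhere, and `h_y - h_x` vanishes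
at `0`, so `‖h_y − h_x‖_w² = ∫ₓʸ w (1/w)² = ∫ₓʸ 1/w`. Since `1 ≤ w ≤ w(y)` on `[x, y]`, this integral
lies between `(y − x)/w(y)` and `y − x`. -/

theorem hker'_sub_hker' (w : ℝ → ℝ) {x y : ℝ} (hxy : x ≤ y) :
    (fun z => hker' w y z - hker' w x z) = (Ioc x y).indicator (fun s => 1 / w s) := by
  rw [← Iic_sdiff_Iic, indicator_sdiff (Iic_subset_Iic.mpr hxy)]
  rfl

theorem hker_apply_zero (w : ℝ → ℝ) {x : ℝ} (hx : 0 ≤ x) : hker w x 0 = 1 := by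
  simp [hker, hx]

theorem wInner_indicator_self {w g f : ℝ → ℝ} {s : Set ℝ} (hs : MeasurableSet s)
    (hs₀ : s ⊆ Ioi 0) (hg : g 0 = 0) :
    wInner w g (s.indicator f) g (s.indicator f) = ∫ z in s, w z * f z ^ 2 := by
  have hintegrand : (fun z => w z * s.indicator f z * s.indicator f z) =
      s.indicator (fun z => w z * f z ^ 2) := by
    ext z
    by_cases hz : z ∈ s <;> simp [hz, sq, mul_assoc]
  rw [wInner, hg, zero_mul, zero_add, hintegrand, setIntegral_indicator hs,
    inter_eq_right.mpr hs₀]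

namespace IsWeight

variable {w : ℝ → ℝ} (hw : IsWeight w) {x y : ℝ}
include hw

theorem pos_s3 {z : ℝ} (hz : 0 ≤ z) : 0 < w z :=
  one_pos.trans_le (hw.one_le z hz)

theorem intervalIntegrable_one_div (hx : 0 ≤ x) (hxy : x ≤ y) :
    IntervalIntegrable (fun s => 1 / w s) volume x y :=
  ContinuousOn.intervalIntegrable_of_Icc hxy <| continuousOn_const.div
    (hw.cont.mono fun _ hz => hx.trans hz.1) fun _ hz => (hw.pos_s3 (hx.trans hz.1)).ne'

theorem integral_one_div_le (hx : 0 ≤ x) (hxy : x ≤ y) :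
    ∫ z in x..y, 1 / w z ≤ y - x := by
  calc ∫ z in x..y, 1 / w z ≤ ∫ _ in x..y, (1 : ℝ) :=
        intervalIntegral.integral_mono_on hxy (hw.intervalIntegrable_one_div hx hxy)
          intervalIntegrable_const fun z hz =>
            (div_le_one (hw.pos_s3 (hx.trans hz.1))).mpr (hw.one_le z (hx.trans hz.1))
    _ = y - x := by simp

theorem div_le_integral_one_div (hx : 0 ≤ x) (hxy : x ≤ y) :
    (y - x) / w y ≤ ∫ z in x..y, 1 / w z := by
  calc (y - x) / w y = ∫ _ in x..y, 1 / w y := by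
        rw [intervalIntegral.integral_const, smul_eq_mul, mul_one_div]
    _ ≤ ∫ z in x..y, 1 / w z :=
        intervalIntegral.integral_mono_on hxy intervalIntegrable_const
          (hw.intervalIntegrable_one_div hx hxy) fun z hz =>
            one_div_le_one_div_of_le (hw.pos_s3 (hx.trans hz.1))
              (hw.mono (hx.trans hz.1) (hx.trans hxy) hz.2)

theorem wNorm_hker_sub (hx : 0 ≤ x) (hxy : x ≤ y) :
    wNorm w (fun z => hker w y z - hker w x z) (fun z => hker' w y z - hker' w x z) =
      Real.sqrt (∫ z in x..y, 1 / w z) := by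
  have hw_sq_inv : ∀ z ∈ Ioc x y, w z * (1 / w z) ^ 2 = 1 / w z := fun z hz => by
    field_simp [(hw.pos_s3 (hx.trans hz.1.le)).ne']
  rw [wNorm, hker'_sub_hker' w hxy,
    wInner_indicator_self measurableSet_Ioc (fun _ hz => hx.trans_lt hz.1)
      (by simp [hker_apply_zero w hx, hker_apply_zero w (hx.trans hxy)]),
    setIntegral_congr_fun measurableSet_Ioc hw_sq_inv, intervalIntegral.integral_of_le hxy]

end IsWeight

/-- the kernel map `x ↦ h_x` is 1/2-Hölder with constant 1,
and `‖h_y − h_x‖_w ≥ √((y−x)/w(y))` for `0 ≤ x ≤ y`. -/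
theorem stmt3 (w : ℝ → ℝ) (hw : IsWeight w) (x y : ℝ) (hx : 0 ≤ x) (hxy : x ≤ y) :
    wNorm w (fun z => hker w y z - hker w x z) (fun z => hker' w y z - hker' w x z)
      ≤ Real.sqrt (y - x) ∧
    Real.sqrt ((y - x) / w y) ≤
      wNorm w (fun z => hker w y z - hker w x z) (fun z => hker' w y z - hker' w x z) := by
  rw [hw.wNorm_hker_sub hx hxy]
  exact ⟨Real.sqrt_le_sqrt (hw.integral_one_div_le hx hxy),
    Real.sqrt_le_sqrt (hw.div_le_integral_one_div hx hxy)⟩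
end
end

section
/- Let f : ℝ≥0 → ℝ be measurable and assume ∫₀^∞ 1/w < ∞. The following are equivalent: (1) the multiplication operator M_f (g ↦ fg) is an everywhere-defined continuous linear operator on H_w; (2) M_f is everywhere defined on H_w (fg ∈ H_w for all g ∈ H_w); (3) f ∈ H_w. Moreover, if f ∈ H_w then the operator norm of M_f is at most √(5+4k²)·‖f‖_w where k² = ∫₀^∞ 1/w. -/
/-!
Every `g ∈ H_w` is bounded: `g x = g 0 + ∫₀ˣ g'`, and Cauchy–Schwarz against the weight,
`(∫₀ˣ |g'|)² ≤ (∫ 1/w) (∫ w g'²)`, gives `g(x)² ≤ (1 + k²) ‖g‖²`. Hence for `f, g ∈ H_w`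
the product `fg` is absolutely continuous with derivative `f'g + fg'` (integration by parts
for absolutely continuous functions), and
`w (f'g + fg')² ≤ 2 (1 + k²) (‖g‖² w f'² + ‖f‖² w g'²)`; integrating,
`‖fg‖² ≤ f(0)²g(0)² + 4 (1 + k²) ‖f‖² ‖g‖² ≤ (5 + 4k²) ‖f‖² ‖g‖²`.
Conversely, if `M_f` is defined on all of `H_w`, then `f = M_f 1 ∈ H_w`.
-/

open MeasureTheory Set Filter

noncomputable section

theorem integral_abs_le_sqrt_mul_sqrt {α : Type*} [MeasurableSpace α] {μ : Measure α}
    {u φ : α → ℝ} (hu : ∀ᵐ t ∂μ, 0 < u t) (h₁ : Integrable (fun t => 1 / u t) μ)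
    (h₂ : Integrable (fun t => u t * φ t ^ 2) μ) :
    ∫ t, |φ t| ∂μ ≤ √(∫ t, 1 / u t ∂μ) * √(∫ t, u t * φ t ^ 2 ∂μ) := by
  have hF : MemLp (fun t => √(1 / u t)) 2 μ := by
    refine (memLp_two_iff_integrable_sq h₁.1.aemeasurable.sqrt.aestronglyMeasurable).2
      (h₁.congr ?_)
    filter_upwards [hu] with t ht
    rw [Real.sq_sqrt (by positivity)]
  have hG : MemLp (fun t => √(u t * φ t ^ 2)) 2 μ := by
    refine (memLp_two_iff_integrable_sq h₂.1.aemeasurable.sqrt.aestronglyMeasurable).2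
      (h₂.congr ?_)
    filter_upwards [hu] with t ht
    rw [Real.sq_sqrt (by positivity)]
  have holder := integral_mul_le_Lp_mul_Lq_of_nonneg Real.HolderConjugate.two_two
    (f := fun t => √(1 / u t)) (g := fun t => √(u t * φ t ^ 2))
    (ae_of_all _ fun _ => Real.sqrt_nonneg _) (ae_of_all _ fun _ => Real.sqrt_nonneg _)
    (by rwa [ENNReal.ofReal_ofNat]) (by rwa [ENNReal.ofReal_ofNat])
  convert holder using 1
  · refine integral_congr_ae ?_
    filter_upwards [hu] with t ht
    rw [← Real.sqrt_mul (by positivity), show 1 / u t * (u t * φ t ^ 2) = φ t ^ 2 by field_simp,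
      Real.sqrt_sq_eq_abs]
  · simp only [Real.rpow_two, ← Real.sqrt_eq_rpow]
    congr 2 <;> refine integral_congr_ae ?_ <;> filter_upwards [hu] with t ht
    all_goals exact (Real.sq_sqrt (by positivity)).symm

theorem ContinuousOn.of_eq_add_intervalIntegral {f f' : ℝ → ℝ} {a b : ℝ}
    (hf' : IntervalIntegrable f' volume a b)
    (hf : ∀ x ∈ uIcc a b, f x = f a + ∫ t in a..x, f' t) : ContinuousOn f (uIcc a b) :=
  (continuousOn_const.add
    (hf'.absolutelyContinuousOnInterval_intervalIntegral left_mem_uIcc).continuousOn).congr hf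

theorem integral_deriv_mul_eq_sub_of_eq_add_intervalIntegral {f f' g g' : ℝ → ℝ} {a b : ℝ}
    (hf' : IntervalIntegrable f' volume a b) (hg' : IntervalIntegrable g' volume a b)
    (hf : ∀ x ∈ uIcc a b, f x = f a + ∫ t in a..x, f' t)
    (hg : ∀ x ∈ uIcc a b, g x = g a + ∫ t in a..x, g' t) :
    ∫ x in a..b, f' x * g x + f x * g' x = f b * g b - f a * g a := by
  set F : ℝ → ℝ := fun x => f a + ∫ t in a..x, f' t
  set G : ℝ → ℝ := fun x => g a + ∫ t in a..x, g' t
  have hF : AbsolutelyContinuousOnInterval F a b :=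
    (LipschitzWith.const (f a)).lipschitzOnWith.absolutelyContinuousOnInterval.add
      (hf'.absolutelyContinuousOnInterval_intervalIntegral left_mem_uIcc)
  have hG : AbsolutelyContinuousOnInterval G a b :=
    (LipschitzWith.const (g a)).lipschitzOnWith.absolutelyContinuousOnInterval.add
      (hg'.absolutelyContinuousOnInterval_intervalIntegral left_mem_uIcc)
  have hends : F b * G b - F a * G a = f b * g b - f a * g a := by
    simp only [F, G, ← hf b right_mem_uIcc, ← hg b right_mem_uIcc, ← hf a left_mem_uIcc,
      ← hg a left_mem_uIcc]
  rw [← hends, ← hF.integral_deriv_mul_eq_sub hG]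
  refine intervalIntegral.integral_congr_ae ?_
  filter_upwards [hf'.ae_hasDerivAt_integral, hg'.ae_hasDerivAt_integral] with x hFx hGx hx
  have hx' : x ∈ uIcc a b := uIoc_subset_uIcc hx
  rw [((hFx hx' a left_mem_uIcc).const_add (f a)).deriv,
    ((hGx hx' a left_mem_uIcc).const_add (g a)).deriv, hf x hx', hg x hx']

theorem iUnion_Ioc_add_natCast (a : ℝ) : ⋃ n : ℕ, Ioc a (a + n) = Ioi a :=
  iUnion_Ioc_eq_Ioi_self_iff.2 fun x _ =>
    (exists_nat_ge (x - a)).imp fun _ hn => by linarith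

theorem aestronglyMeasurable_restrict_Ioi_of_integrableOn_Ioc {φ : ℝ → ℝ} {a : ℝ}
    (h : ∀ x ∈ Ici a, IntegrableOn φ (Ioc a x)) :
    AEStronglyMeasurable φ (volume.restrict (Ioi a)) := by
  rw [← iUnion_Ioc_add_natCast, aestronglyMeasurable_iUnion_iff]
  exact fun n => (h _ (by simp)).1

theorem aemeasurable_of_integrableOn_one_div {w : ℝ → ℝ} {s : Set ℝ}
    (hk : IntegrableOn (fun x => 1 / w x) s) : AEMeasurable w (volume.restrict s) := by
  have := hk.aemeasurable.inv
  rwa [show (fun x => 1 / w x)⁻¹ = w by ext; simp] at this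

theorem IsWeight.pos_s8 {w : ℝ → ℝ} (hw : IsWeight w) : ∀ t ∈ Ioi (0 : ℝ), 0 < w t :=
  fun t ht => one_pos.trans_le (hw.one_le t (mem_Ioi.1 ht).le)

theorem wNorm_sq {w : ℝ → ℝ} (hw : ∀ t ∈ Ioi (0 : ℝ), 0 < w t) (g g' : ℝ → ℝ) :
    wNorm w g g' ^ 2 = g 0 ^ 2 + ∫ t in Ioi (0 : ℝ), w t * g' t ^ 2 := by
  have hI : 0 ≤ ∫ t in Ioi (0 : ℝ), w t * g' t ^ 2 :=
    setIntegral_nonneg measurableSet_Ioi fun t ht => by have := hw t ht; positivity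
  have hinner : wInner w g g' g g' = g 0 ^ 2 + ∫ t in Ioi (0 : ℝ), w t * g' t ^ 2 := by
    simp only [wInner, sq, mul_assoc]
  rw [wNorm, hinner, Real.sq_sqrt (by positivity)]

theorem wNorm_nonneg {w g g' : ℝ → ℝ} : 0 ≤ wNorm w g g' := Real.sqrt_nonneg _

theorem memHw_const (w : ℝ → ℝ) (c : ℝ) : MemHw w (fun _ => c) (fun _ => 0) :=
  ⟨fun _ _ => by simp, fun _ _ => integrableOn_zero, by simp⟩

namespace MemHw

variable {w f f' g g' : ℝ → ℝ} {x : ℝ}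

theorem intervalIntegrable (hg : MemHw w g g') (hx : 0 ≤ x) :
    IntervalIntegrable g' volume 0 x :=
  (intervalIntegrable_iff_integrableOn_Ioc_of_le hx).2 (hg.2.1 x hx)

theorem eq_add_intervalIntegral (hg : MemHw w g g') (hx : 0 ≤ x) :
    ∀ y ∈ uIcc 0 x, g y = g 0 + ∫ t in 0..y, g' t := by
  rw [uIcc_of_le hx]
  intro y hy
  rw [intervalIntegral.integral_of_le hy.1]
  exact hg.1 y hy.1

theorem continuousOn (hg : MemHw w g g') (hx : 0 ≤ x) : ContinuousOn g (uIcc 0 x) :=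
  .of_eq_add_intervalIntegral (hg.intervalIntegrable hx) (hg.eq_add_intervalIntegral hx)

theorem integrableOn_deriv_mul (hf : MemHw w f f') (hg : MemHw w g g') (hx : 0 ≤ x) :
    IntegrableOn (fun t => f' t * g t + f t * g' t) (Ioc 0 x) := by
  rw [← intervalIntegrable_iff_integrableOn_Ioc_of_le hx]
  exact ((hf.intervalIntegrable hx).mul_continuousOn (hg.continuousOn hx)).add
    ((hg.intervalIntegrable hx).continuousOn_mul (hf.continuousOn hx))

theorem mul_eq_add_integral (hf : MemHw w f f') (hg : MemHw w g g') (hx : 0 ≤ x) :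
    f x * g x = f 0 * g 0 + ∫ t in Ioc 0 x, (f' t * g t + f t * g' t) := by
  rw [← intervalIntegral.integral_of_le hx,
    integral_deriv_mul_eq_sub_of_eq_add_intervalIntegral (hf.intervalIntegrable hx)
      (hg.intervalIntegrable hx) (hf.eq_add_intervalIntegral hx) (hg.eq_add_intervalIntegral hx)]
  ring

theorem sq_le (hw : ∀ t ∈ Ioi (0 : ℝ), 0 < w t) (hk : IntegrableOn (fun x => 1 / w x) (Ioi 0))
    (hg : MemHw w g g') (hx : 0 ≤ x) :
    g x ^ 2 ≤ (1 + ∫ s in Ioi (0 : ℝ), 1 / w s) * wNorm w g g' ^ 2 := by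
  set K := ∫ s in Ioi (0 : ℝ), 1 / w s
  set I := ∫ t in Ioi (0 : ℝ), w t * g' t ^ 2
  have hinv : ∀ t ∈ Ioi (0 : ℝ), 0 ≤ 1 / w t := fun t ht => (one_div_pos.2 (hw t ht)).le
  have hsq : ∀ t ∈ Ioi (0 : ℝ), 0 ≤ w t * g' t ^ 2 := fun t ht => by
    have := hw t ht; positivity
  have hK : 0 ≤ K := setIntegral_nonneg measurableSet_Ioi hinv
  have hI : 0 ≤ I := setIntegral_nonneg measurableSet_Ioi hsq
  have hpos : ∀ᵐ t ∂volume.restrict (Ioc 0 x), 0 < w t :=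
    (ae_restrict_mem measurableSet_Ioc).mono fun t ht => hw t ht.1
  have hJ : |∫ t in Ioc 0 x, g' t| ≤ √K * √I := calc
    _ ≤ ∫ t in Ioc 0 x, |g' t| := abs_integral_le_integral_abs
    _ ≤ √(∫ t in Ioc 0 x, 1 / w t) * √(∫ t in Ioc 0 x, w t * g' t ^ 2) :=
      integral_abs_le_sqrt_mul_sqrt hpos (hk.mono_set Ioc_subset_Ioi_self)
        (hg.2.2.mono_set Ioc_subset_Ioi_self)
    _ ≤ √K * √I := by
      gcongr
      · exact setIntegral_mono_set hk (ae_restrict_of_forall_mem measurableSet_Ioi hinv)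
          Ioc_subset_Ioi_self.eventuallyLE
      · exact setIntegral_mono_set hg.2.2 (ae_restrict_of_forall_mem measurableSet_Ioi hsq)
          Ioc_subset_Ioi_self.eventuallyLE
  set J := ∫ t in Ioc 0 x, g' t
  have hJ2 : J ^ 2 ≤ K * I := by
    have := pow_le_pow_left₀ (abs_nonneg J) hJ 2
    rwa [sq_abs, mul_pow, Real.sq_sqrt hK, Real.sq_sqrt hI] at this
  have hcross : 2 * g 0 * J ≤ K * g 0 ^ 2 + I := by
    nlinarith [sq_nonneg (√K * |g 0| - √I), Real.sq_sqrt hK, Real.sq_sqrt hI, sq_abs (g 0),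
      abs_mul_abs_self (g 0), le_abs_self (g 0 * J), abs_mul (g 0) J, abs_nonneg (g 0)]
  rw [wNorm_sq hw, hg.1 x hx]
  nlinarith

theorem weight_mul_sq_le (hw : ∀ t ∈ Ioi (0 : ℝ), 0 < w t)
    (hk : IntegrableOn (fun x => 1 / w x) (Ioi 0)) (hf : MemHw w f f') (hg : MemHw w g g') :
    ∀ t ∈ Ioi (0 : ℝ), w t * (f' t * g t + f t * g' t) ^ 2 ≤
      2 * (1 + ∫ s in Ioi (0 : ℝ), 1 / w s) *
        (wNorm w g g' ^ 2 * (w t * f' t ^ 2) + wNorm w f f' ^ 2 * (w t * g' t ^ 2)) := by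
  intro t ht
  have hwt := hw t ht
  have hft := hf.sq_le hw hk (mem_Ioi.1 ht).le
  have hgt := hg.sq_le hw hk (mem_Ioi.1 ht).le
  calc w t * (f' t * g t + f t * g' t) ^ 2
      ≤ w t * (2 * (f' t ^ 2 * g t ^ 2) + 2 * (f t ^ 2 * g' t ^ 2)) := by
        gcongr; nlinarith [sq_nonneg (f' t * g t - f t * g' t)]
    _ ≤ w t * (2 * (f' t ^ 2 * ((1 + ∫ s in Ioi (0 : ℝ), 1 / w s) * wNorm w g g' ^ 2)) +
          2 * ((1 + ∫ s in Ioi (0 : ℝ), 1 / w s) * wNorm w f f' ^ 2 * g' t ^ 2)) := by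
        gcongr
    _ = _ := by ring

theorem mul (hw : ∀ t ∈ Ioi (0 : ℝ), 0 < w t) (hk : IntegrableOn (fun x => 1 / w x) (Ioi 0))
    (hf : MemHw w f f') (hg : MemHw w g g') :
    MemHw w (fun x => f x * g x) (fun t => f' t * g t + f t * g' t) := by
  refine ⟨fun x hx => hf.mul_eq_add_integral hg hx, fun x hx => hf.integrableOn_deriv_mul hg hx,
    ?_⟩
  have hmeas : AEStronglyMeasurable (fun t => w t * (f' t * g t + f t * g' t) ^ 2)
      (volume.restrict (Ioi 0)) :=
    ((aemeasurable_of_integrableOn_one_div hk).mul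
      ((aestronglyMeasurable_restrict_Ioi_of_integrableOn_Ioc
        fun x hx => hf.integrableOn_deriv_mul hg hx).aemeasurable.pow_const 2)).aestronglyMeasurable
  have hbound : IntegrableOn (fun t => 2 * (1 + ∫ s in Ioi (0 : ℝ), 1 / w s) *
      (wNorm w g g' ^ 2 * (w t * f' t ^ 2) + wNorm w f f' ^ 2 * (w t * g' t ^ 2))) (Ioi 0) :=
    ((hf.2.2.const_mul _).add (hg.2.2.const_mul _)).const_mul _
  refine Integrable.mono' hbound hmeas (ae_restrict_of_forall_mem measurableSet_Ioi fun t ht => ?_)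
  rw [Real.norm_of_nonneg (by have := hw t ht; positivity)]
  exact weight_mul_sq_le hw hk hf hg t ht

theorem wNorm_mul_le (hw : ∀ t ∈ Ioi (0 : ℝ), 0 < w t)
    (hk : IntegrableOn (fun x => 1 / w x) (Ioi 0)) (hf : MemHw w f f') (hg : MemHw w g g') :
    wNorm w (fun x => f x * g x) (fun t => f' t * g t + f t * g' t) ≤
      √(5 + 4 * ∫ s in Ioi (0 : ℝ), 1 / w s) * wNorm w f f' * wNorm w g g' := by
  set K := ∫ s in Ioi (0 : ℝ), 1 / w s
  set Nf := wNorm w f f'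
  set Ng := wNorm w g g'
  set If := ∫ t in Ioi (0 : ℝ), w t * f' t ^ 2
  set Ig := ∫ t in Ioi (0 : ℝ), w t * g' t ^ 2
  have hK : 0 ≤ K := setIntegral_nonneg measurableSet_Ioi fun t ht => (one_div_pos.2 (hw t ht)).le
  have hIf : 0 ≤ If := setIntegral_nonneg measurableSet_Ioi fun t ht => by
    have := hw t ht; positivity
  have hIg : 0 ≤ Ig := setIntegral_nonneg measurableSet_Ioi fun t ht => by
    have := hw t ht; positivity
  have hNf : Nf ^ 2 = f 0 ^ 2 + If := wNorm_sq hw f f'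
  have hNg : Ng ^ 2 = g 0 ^ 2 + Ig := wNorm_sq hw g g'
  have hderiv : ∫ t in Ioi (0 : ℝ), w t * (f' t * g t + f t * g' t) ^ 2 ≤
      2 * (1 + K) * (Ng ^ 2 * If + Nf ^ 2 * Ig) := by
    have hbound : IntegrableOn (fun t => 2 * (1 + K) *
        (Ng ^ 2 * (w t * f' t ^ 2) + Nf ^ 2 * (w t * g' t ^ 2))) (Ioi 0) :=
      ((hf.2.2.const_mul _).add (hg.2.2.const_mul _)).const_mul _
    calc _ ≤ ∫ t in Ioi (0 : ℝ), 2 * (1 + K) *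
          (Ng ^ 2 * (w t * f' t ^ 2) + Nf ^ 2 * (w t * g' t ^ 2)) :=
          setIntegral_mono_on (hf.mul hw hk hg).2.2 hbound measurableSet_Ioi
            (weight_mul_sq_le hw hk hf hg)
      _ = _ := by
        rw [integral_const_mul, integral_add (hf.2.2.const_mul _) (hg.2.2.const_mul _),
          integral_const_mul, integral_const_mul]
  have hvalue : (f 0 * g 0) ^ 2 ≤ Nf ^ 2 * Ng ^ 2 := by
    rw [mul_pow]; exact mul_le_mul (by linarith) (by linarith) (sq_nonneg _) (sq_nonneg _)
  have hf_le : Ng ^ 2 * If ≤ Nf ^ 2 * Ng ^ 2 := by nlinarith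
  have hg_le : Nf ^ 2 * Ig ≤ Nf ^ 2 * Ng ^ 2 := by nlinarith
  have hsq : wNorm w (fun x => f x * g x) (fun t => f' t * g t + f t * g' t) ^ 2 ≤
      (5 + 4 * K) * (Nf ^ 2 * Ng ^ 2) := by
    have := mul_le_mul_of_nonneg_left (add_le_add hf_le hg_le) (by positivity : 0 ≤ 2 * (1 + K))
    rw [wNorm_sq hw]
    linarith
  calc _ = √(wNorm w (fun x => f x * g x) (fun t => f' t * g t + f t * g' t) ^ 2) :=
        (Real.sqrt_sq wNorm_nonneg).symm
    _ ≤ √((5 + 4 * K) * (Nf ^ 2 * Ng ^ 2)) := Real.sqrt_le_sqrt hsq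
    _ = √(5 + 4 * K) * Nf * Ng := by
      rw [Real.sqrt_mul (by positivity), Real.sqrt_mul (sq_nonneg _), Real.sqrt_sq wNorm_nonneg,
        Real.sqrt_sq wNorm_nonneg, mul_assoc]

end MemHw

theorem stmt8_general (w : ℝ → ℝ) (hw : IsWeight w)
    (hk : IntegrableOn (fun x => 1 / w x) (Ioi 0))
    (f : ℝ → ℝ) :
    ((∃ C : ℝ, ∀ g g' : ℝ → ℝ, MemHw w g g' → ∃ d : ℝ → ℝ,
        MemHw w (fun x => f x * g x) d ∧
        wNorm w (fun x => f x * g x) d ≤ C * wNorm w g g') ↔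
      (∀ g g' : ℝ → ℝ, MemHw w g g' → ∃ d : ℝ → ℝ, MemHw w (fun x => f x * g x) d)) ∧
    ((∀ g g' : ℝ → ℝ, MemHw w g g' → ∃ d : ℝ → ℝ, MemHw w (fun x => f x * g x) d) ↔
      ∃ f' : ℝ → ℝ, MemHw w f f') ∧
    (∀ f' : ℝ → ℝ, MemHw w f f' → ∀ g g' : ℝ → ℝ, MemHw w g g' →
      ∃ d : ℝ → ℝ, MemHw w (fun x => f x * g x) d ∧
        wNorm w (fun x => f x * g x) d ≤
          Real.sqrt (5 + 4 * ∫ s in Ioi (0:ℝ), 1 / w s) * wNorm w f f' * wNorm w g g') := by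
  have bounded : ∀ f' : ℝ → ℝ, MemHw w f f' → ∀ g g' : ℝ → ℝ, MemHw w g g' →
      ∃ d : ℝ → ℝ, MemHw w (fun x => f x * g x) d ∧
        wNorm w (fun x => f x * g x) d ≤
          √(5 + 4 * ∫ s in Ioi (0 : ℝ), 1 / w s) * wNorm w f f' * wNorm w g g' :=
    fun f' hf g g' hg => ⟨_, hf.mul hw.pos_s8 hk hg, hf.wNorm_mul_le hw.pos_s8 hk hg⟩
  have mem_of_defined : (∀ g g' : ℝ → ℝ, MemHw w g g' → ∃ d : ℝ → ℝ,
      MemHw w (fun x => f x * g x) d) → ∃ f' : ℝ → ℝ, MemHw w f f' := fun h => by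
    simpa using h _ _ (memHw_const w 1)
  refine ⟨⟨fun ⟨C, hC⟩ g g' hg => (hC g g' hg).imp fun _ hd => hd.1, fun h => ?_⟩,
    ⟨mem_of_defined, fun ⟨f', hf⟩ g g' hg => (bounded f' hf g g' hg).imp fun _ hd => hd.1⟩,
    bounded⟩
  obtain ⟨f', hf⟩ := mem_of_defined h
  exact ⟨_, bounded f' hf⟩

/-- for measurable `f`, the multiplication operator `M_f : g ↦ fg`
is continuous on `H_w` iff it is everywhere defined iff `f ∈ H_w`; and if
`f ∈ H_w` its operator norm is at most `√(5+4k²)‖f‖_w`. -/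
theorem stmt8 (w : ℝ → ℝ) (hw : IsWeight w)
    (hk : IntegrableOn (fun x => 1 / w x) (Ioi 0))
    (f : ℝ → ℝ) (hf : Measurable f) :
    ((∃ C : ℝ, ∀ g g' : ℝ → ℝ, MemHw w g g' → ∃ d : ℝ → ℝ,
        MemHw w (fun x => f x * g x) d ∧
        wNorm w (fun x => f x * g x) d ≤ C * wNorm w g g') ↔
      (∀ g g' : ℝ → ℝ, MemHw w g g' → ∃ d : ℝ → ℝ, MemHw w (fun x => f x * g x) d)) ∧
    ((∀ g g' : ℝ → ℝ, MemHw w g g' → ∃ d : ℝ → ℝ, MemHw w (fun x => f x * g x) d) ↔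
      ∃ f' : ℝ → ℝ, MemHw w f f') ∧
    (∀ f' : ℝ → ℝ, MemHw w f f' → ∀ g g' : ℝ → ℝ, MemHw w g g' →
      ∃ d : ℝ → ℝ, MemHw w (fun x => f x * g x) d ∧
        wNorm w (fun x => f x * g x) d ≤
          Real.sqrt (5 + 4 * ∫ s in Ioi (0:ℝ), 1 / w s) * wNorm w f f' * wNorm w g g') :=
  stmt8_general w hw hk f
end
end

section
/- An integral operator T on H_w with kernel q (Tf(x) = ∫₀^∞ q(x,y) f'(y) dy) is an everywhere-defined continuous linear operator if and only if: (1) q(x,·)/√w ∈ L²(ℝ≥0) for every x ≥ 0, and (2) for every f ∈ H_w, the function x ↦ ∫₀^∞ q(x,y) f'(y) dy belongs to H_w. -/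
/-!
The map `g ↦ (g 0, √w g')` identifies `H_w` isometrically with `ℝ × L²(0,∞)`, and
`g x - g 0 = ⟪√w g', J x⟫` with `J x = 1_(0,x] / √w`, where `‖J x‖ ≤ √x`. Hence
`|g x| ≤ (1 + √x) ‖g‖_w`, and by Lebesgue differentiation the `J x` separate points of `L²`.
In these coordinates `Tf(x) = ⟪q(x,·)/√w, √w f'⟫`.

If `T` is bounded, `u ↦ ⟪q(x,·)/√w, u⟫` is a bounded functional on `L²`; testing it on the
truncations of `q(x,·)/√w` to sets of finite measure where it is bounded shows
`q(x,·)/√w ∈ L²`. Conversely, under (1) and (2) the map `√w f' ↦ √w (Tf)'` is defined on all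
of `L²`, and its `J t`-coordinate `Tf(t) - Tf(0) = ⟪(q(t,·) - q(0,·))/√w, √w f'⟫` is linear and
continuous in `√w f'`. Since the `J t` separate points, the map is linear with closed graph,
hence bounded, and `|Tf(0)| ≤ ‖q(0,·)/√w‖ ‖√w f'‖` bounds the remaining coordinate.
-/

open MeasureTheory Set Filter

noncomputable section

open Topology

theorem ae_restrict_Ioi_eq_zero_of_setIntegral_Ioc_eq_zero {E : Type*} [NormedAddCommGroup E]
    [NormedSpace ℝ E] [CompleteSpace E] {f : ℝ → E}
    (hf : ∀ x, 0 ≤ x → IntegrableOn f (Ioc 0 x))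
    (h : ∀ x, 0 ≤ x → ∫ t in Ioc 0 x, f t = 0) :
    f =ᵐ[volume.restrict (Ioi 0)] 0 := by
  set F := (Ioi (0:ℝ)).indicator f
  have hF : LocallyIntegrable F volume := by
    intro x
    refine ⟨Iio (|x| + 1), Iio_mem_nhds (by linarith [le_abs_self x]), ?_⟩
    refine (integrable_indicator_iff measurableSet_Ioi).2 ?_
    rw [IntegrableOn, Measure.restrict_restrict measurableSet_Ioi, Ioi_inter_Iio]
    exact (hf _ (by positivity)).mono_set Ioo_subset_Ioc_self
  have hF_int : ∀ y, 0 < y → ∫ t in (0:ℝ)..y, F t = 0 := fun y hy => by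
    rw [intervalIntegral.integral_of_le hy.le, setIntegral_indicator measurableSet_Ioi,
      Ioc_inter_Ioi, sup_idem, h y hy.le]
  filter_upwards [ae_restrict_of_ae (LocallyIntegrable.ae_hasDerivAt_integral hF),
    ae_restrict_mem measurableSet_Ioi] with x hx (hx0 : 0 < x)
  have hconst : HasDerivAt (fun y => ∫ t in (0:ℝ)..y, F t) 0 x :=
    (hasDerivAt_const x (0:E)).congr_of_eventuallyEq
      (eventually_gt_nhds hx0 |>.mono fun y hy => hF_int y hy)
  simpa [F, indicator_of_mem (show x ∈ Ioi 0 from hx0)] using (hx 0).unique hconst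

theorem exists_continuousLinearMap_inner_eq {E ι : Type*} [NormedAddCommGroup E]
    [InnerProductSpace ℝ E] [CompleteSpace E] (J k : ι → E)
    (hJ : ∀ v : E, (∀ t, inner ℝ v (J t) = 0) → v = 0)
    (h : ∀ u : E, ∃ v : E, ∀ t, inner ℝ v (J t) = inner ℝ (k t) u) :
    ∃ L : E →L[ℝ] E, ∀ u v, (∀ t, inner ℝ v (J t) = inner ℝ (k t) u) → L u = v := by
  choose U hU using h
  have ext : ∀ v v' : E, (∀ t, inner ℝ v (J t) = inner ℝ v' (J t)) → v = v' := fun v v' hvv' =>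
    sub_eq_zero.1 <| hJ _ fun t => by rw [inner_sub_left, hvv', sub_self]
  let Ulin : E →ₗ[ℝ] E :=
    { toFun := U
      map_add' := fun u v => ext _ _ fun t => by
        rw [hU, inner_add_left, hU, hU, inner_add_right]
      map_smul' := fun c u => ext _ _ fun t => by
        rw [hU, RingHom.id_apply, real_inner_smul_left, hU, inner_smul_right] }
  have hclosed : Continuous Ulin := Ulin.continuous_of_seq_closed_graph fun u x y hu hUu =>
    ext _ _ fun t => tendsto_nhds_unique ((hUu.inner tendsto_const_nhds))
      (by simpa only [Function.comp_def, Ulin, LinearMap.coe_mk, AddHom.coe_mk, hU] using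
        (tendsto_const_nhds (x := k t)).inner hu) |>.trans (hU x t).symm
  exact ⟨⟨Ulin, hclosed⟩, fun u v hv => ext _ _ fun t => (hU u t).trans (hv t).symm⟩

theorem MeasureTheory.L2.norm_eq_sqrt_integral_sq {α : Type*} [MeasurableSpace α]
    {ν : Measure α} (v : Lp ℝ 2 ν) : ‖v‖ = √(∫ a, v a ^ 2 ∂ν) := by
  rw [← Real.sqrt_sq (norm_nonneg v), ← real_inner_self_eq_norm_sq, L2.inner_def]
  simp only [RCLike.inner_apply, conj_trivial, sq]

theorem memLp_two_of_integral_mul_le {α : Type*} [MeasurableSpace α] {ν : Measure α}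
    [SigmaFinite ν] {k : α → ℝ} (hk : AEStronglyMeasurable k ν) (K : ℝ)
    (h : ∀ u : Lp ℝ 2 ν, ∫ a, k a * u a ∂ν ≤ K * ‖u‖) : MemLp k 2 ν := by
  set g := hk.mk k
  have hg : Measurable g := hk.stronglyMeasurable_mk.measurable
  set S : ℕ → Set α := fun n => spanningSets ν n ∩ {a | |g a| ≤ n}
  have hS : ∀ n, MeasurableSet (S n) := fun n =>
    (measurableSet_spanningSets ν n).inter (measurableSet_le hg.abs measurable_const)
  have hu : ∀ n, MemLp ((S n).indicator g) 2 ν := fun n =>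
    (memLp_indicator_const 2 (hS n) (n : ℝ) (Or.inr
      ((measure_mono inter_subset_left).trans_lt (measure_spanningSets_lt_top ν n)).ne)).of_le
      (hg.aestronglyMeasurable.indicator (hS n)) (Eventually.of_forall fun a => by
        by_cases ha : a ∈ S n
        · simpa [indicator_of_mem ha] using ha.2
        · simp [indicator_of_notMem ha])
  have hnorm : ∀ n, ‖(hu n).toLp‖ ≤ max K 0 := by
    intro n
    have hsq : ‖(hu n).toLp‖ ^ 2 ≤ K * ‖(hu n).toLp‖ := by
      refine le_of_eq_of_le ?_ (h _)
      rw [← real_inner_self_eq_norm_sq, L2.inner_def]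
      refine integral_congr_ae ?_
      filter_upwards [(hu n).coeFn_toLp, hk.ae_eq_mk] with a ha hka
      by_cases haS : a ∈ S n
      · simp [ha, hka, indicator_of_mem haS, g, sq]
      · simp [ha, indicator_of_notMem haS]
    nlinarith [norm_nonneg (hu n).toLp, le_max_left K 0, le_max_right K 0]
  have hlim : eLpNorm g 2 ν ≤ ENNReal.ofReal (max K 0) := by
    refine Lp.eLpNorm_le_of_ae_tendsto (u := atTop) (f := fun n => ((hu n).toLp : α → ℝ))
      (Eventually.of_forall fun n => ?_) (fun n => (Lp.aestronglyMeasurable _)) ?_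
    · rw [← ENNReal.ofReal_toReal (Lp.eLpNorm_ne_top (hu n).toLp), ← Lp.norm_def]
      exact ENNReal.ofReal_le_ofReal (hnorm n)
    · filter_upwards [ae_all_iff.2 fun n => (hu n).coeFn_toLp] with a ha
      refine tendsto_const_nhds.congr' ?_
      obtain ⟨n₁, hn₁⟩ := (mem_iUnion.1 ((iUnion_spanningSets ν).symm ▸ mem_univ a))
      obtain ⟨n₂, hn₂⟩ := exists_nat_ge |g a|
      filter_upwards [eventually_ge_atTop (max n₁ n₂)] with n hn
      have haS : a ∈ S n := ⟨monotone_spanningSets ν (le_of_max_le_left hn) hn₁,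
        hn₂.trans (by exact_mod_cast le_of_max_le_right hn)⟩
      rw [ha n, indicator_of_mem haS]
  exact ⟨hk, (eLpNorm_congr_ae hk.ae_eq_mk).trans_lt (hlim.trans_lt ENNReal.ofReal_lt_top)⟩

local notation "μ₊" => volume.restrict (Ioi (0:ℝ))

section Weighted

variable {w : ℝ → ℝ}

namespace IsWeight

theorem one_le_sqrt (hw : IsWeight w) {y : ℝ} (hy : 0 ≤ y) : 1 ≤ √(w y) :=
  Real.one_le_sqrt.2 (hw.one_le y hy)

theorem sqrt_pos (hw : IsWeight w) {y : ℝ} (hy : 0 ≤ y) : 0 < √(w y) :=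
  one_pos.trans_le (hw.one_le_sqrt hy)

theorem sq_sqrt (hw : IsWeight w) {y : ℝ} (hy : 0 ≤ y) : √(w y) ^ 2 = w y :=
  Real.sq_sqrt (zero_le_one.trans (hw.one_le y hy))

theorem aemeasurable_sqrt (hw : IsWeight w) : AEMeasurable (fun y => √(w y)) μ₊ :=
  Real.continuous_sqrt.measurable.comp_aemeasurable
    ((hw.cont.aemeasurable measurableSet_Ici).mono_measure
      (Measure.restrict_mono Ioi_subset_Ici_self le_rfl))

theorem memLp_indicator_inv_sqrt (hw : IsWeight w) (x : ℝ) :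
    MemLp ((Ioc 0 x).indicator fun y => 1 / √(w y)) 2 μ₊ :=
  (memLp_indicator_const (s := Ioc 0 x) 2 measurableSet_Ioc (1 : ℝ) (Or.inr (by
    rw [Measure.restrict_apply measurableSet_Ioc]
    exact ((measure_mono inter_subset_left).trans_lt measure_Ioc_lt_top).ne))).of_le
    ((aemeasurable_const.div hw.aemeasurable_sqrt).aestronglyMeasurable.indicator
      measurableSet_Ioc) (by
    filter_upwards [ae_restrict_mem measurableSet_Ioi] with y (hy : 0 < y)
    by_cases hyx : y ∈ Ioc 0 x
    · simp only [indicator_of_mem hyx, norm_one, norm_div,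
        Real.norm_of_nonneg (Real.sqrt_nonneg _)]
      exact div_le_one_of_le₀ (hw.one_le_sqrt hy.le) (Real.sqrt_nonneg _)
    · simp [indicator_of_notMem hyx])

theorem integrableOn_div_sqrt (hw : IsWeight w) {u : ℝ → ℝ} (hu : MemLp u 2 μ₊) (x : ℝ) :
    IntegrableOn (fun t => u t / √(w t)) (Ioc 0 x) := by
  have hsub : volume.restrict (Ioc 0 x) ≤ μ₊ := Measure.restrict_mono Ioc_subset_Ioi_self le_rfl
  have : IsFiniteMeasure (volume.restrict (Ioc (0:ℝ) x)) :=
    ⟨by rw [Measure.restrict_apply_univ]; exact measure_Ioc_lt_top⟩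
  refine ((hu.mono_measure hsub).integrable one_le_two).norm.mono'
    ((hu.aestronglyMeasurable.aemeasurable.div
      hw.aemeasurable_sqrt).aestronglyMeasurable.mono_measure hsub) ?_
  filter_upwards [ae_restrict_mem measurableSet_Ioc] with y hy
  rw [norm_div, Real.norm_of_nonneg (Real.sqrt_nonneg _)]
  exact div_le_self (norm_nonneg _) (hw.one_le_sqrt hy.1.le)

end IsWeight

def incrementRepr (hw : IsWeight w) (x : ℝ) : Lp ℝ 2 μ₊ :=
  (hw.memLp_indicator_inv_sqrt x).toLp

theorem inner_incrementRepr (hw : IsWeight w) (v : Lp ℝ 2 μ₊) (x : ℝ) :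
    inner ℝ v (incrementRepr hw x) = ∫ t in Ioc 0 x, v t / √(w t) := by
  rw [L2.inner_def, ← Measure.restrict_restrict_of_subset Ioc_subset_Ioi_self,
    ← integral_indicator measurableSet_Ioc]
  refine integral_congr_ae ?_
  filter_upwards [(hw.memLp_indicator_inv_sqrt x).coeFn_toLp] with t (ht : incrementRepr hw x t = _)
  rw [RCLike.inner_apply, conj_trivial, ht]
  by_cases htx : t ∈ Ioc 0 x
  · simp [indicator_of_mem htx, div_eq_mul_inv, mul_comm]
  · simp [indicator_of_notMem htx]

theorem norm_incrementRepr_le (hw : IsWeight w) {x : ℝ} (hx : 0 ≤ x) :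
    ‖incrementRepr hw x‖ ≤ √x := by
  refine Real.le_sqrt_of_sq_le ?_
  have hJ : ∀ᵐ t ∂volume.restrict (Ioc 0 x), ‖incrementRepr hw x t / √(w t)‖ ≤ 1 := by
    filter_upwards [ae_restrict_of_ae_restrict_of_subset Ioc_subset_Ioi_self
        (hw.memLp_indicator_inv_sqrt x).coeFn_toLp, ae_restrict_mem measurableSet_Ioc]
      with t (ht : incrementRepr hw x t = _) htx
    have hs := hw.one_le_sqrt htx.1.le
    rw [ht, indicator_of_mem htx, norm_div, norm_div, norm_one,
      Real.norm_of_nonneg (by positivity)]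
    exact div_le_one_of_le₀ ((div_le_one_of_le₀ hs (by positivity)).trans hs) (by positivity)
  calc ‖incrementRepr hw x‖ ^ 2 = inner ℝ (incrementRepr hw x) (incrementRepr hw x) :=
        (real_inner_self_eq_norm_sq _).symm
    _ ≤ ‖∫ t in Ioc 0 x, incrementRepr hw x t / √(w t)‖ := by
        rw [inner_incrementRepr]; exact le_abs_self _
    _ ≤ 1 * volume.real (Ioc 0 x) := norm_setIntegral_le_of_norm_le_const_ae measure_Ioc_lt_top hJ
    _ = x := by simp [hx]

theorem eq_zero_of_forall_inner_incrementRepr (hw : IsWeight w) {v : Lp ℝ 2 μ₊}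
    (hv : ∀ x, 0 ≤ x → inner ℝ v (incrementRepr hw x) = 0) : v = 0 := by
  have hdiv := ae_restrict_Ioi_eq_zero_of_setIntegral_Ioc_eq_zero
    (fun x _ => hw.integrableOn_div_sqrt (Lp.memLp v) x)
    (fun x hx => (inner_incrementRepr hw v x).symm.trans (hv x hx))
  refine Lp.eq_zero_iff_ae_eq_zero.2 ?_
  filter_upwards [hdiv, ae_restrict_mem measurableSet_Ioi] with t ht (htpos : 0 < t)
  simpa [(hw.sqrt_pos htpos.le).ne'] using ht

namespace MemHw

variable {g d : ℝ → ℝ}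

theorem aestronglyMeasurable (hg : MemHw w g d) : AEStronglyMeasurable d μ₊ := by
  rw [← iUnion_Ioc_eq_Ioi_self_iff.2 fun x _ => exists_nat_ge x, aestronglyMeasurable_iUnion_iff]
  exact fun n => (hg.2.1 n (mem_Ici.2 n.cast_nonneg)).aestronglyMeasurable

theorem memLp_sqrt_mul (hw : IsWeight w) (hg : MemHw w g d) :
    MemLp (fun y => √(w y) * d y) 2 μ₊ := by
  refine (memLp_two_iff_integrable_sq
    (hw.aemeasurable_sqrt.aestronglyMeasurable.mul hg.aestronglyMeasurable)).2 (hg.2.2.congr ?_)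
  filter_upwards [ae_restrict_mem measurableSet_Ioi] with y (hy : 0 < y)
  rw [Pi.mul_apply, mul_pow, hw.sq_sqrt hy.le]

def toL2 (hw : IsWeight w) (hg : MemHw w g d) : Lp ℝ 2 μ₊ := (hg.memLp_sqrt_mul hw).toLp

theorem coeFn_toL2 (hw : IsWeight w) (hg : MemHw w g d) :
    hg.toL2 hw =ᵐ[μ₊] fun y => √(w y) * d y :=
  (hg.memLp_sqrt_mul hw).coeFn_toLp

theorem inner_toL2_incrementRepr (hw : IsWeight w) (hg : MemHw w g d) {x : ℝ} (hx : 0 ≤ x) :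
    inner ℝ (hg.toL2 hw) (incrementRepr hw x) = g x - g 0 := by
  rw [inner_incrementRepr, hg.1 x hx, add_sub_cancel_left]
  refine integral_congr_ae ?_
  filter_upwards [ae_restrict_of_ae_restrict_of_subset Ioc_subset_Ioi_self (hg.coeFn_toL2 hw),
    ae_restrict_mem measurableSet_Ioc] with t ht htx
  rw [ht, mul_div_cancel_left₀ _ (hw.sqrt_pos htx.1.le).ne']

theorem wNorm_eq (hw : IsWeight w) (hg : MemHw w g d) :
    wNorm w g d = √(g 0 ^ 2 + ‖hg.toL2 hw‖ ^ 2) := by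
  rw [wNorm, wInner, L2.norm_eq_sqrt_integral_sq,
    Real.sq_sqrt (integral_nonneg fun _ => sq_nonneg _), sq]
  congr 2
  refine integral_congr_ae ?_
  filter_upwards [hg.coeFn_toL2 hw, ae_restrict_mem measurableSet_Ioi] with y hy (hy0 : 0 < y)
  rw [hy, mul_pow, hw.sq_sqrt hy0.le, mul_assoc, sq]

theorem abs_le_wNorm (hw : IsWeight w) (hg : MemHw w g d) {x : ℝ} (hx : 0 ≤ x) :
    |g x| ≤ (1 + √x) * wNorm w g d := by
  set v := hg.toL2 hw
  have hg0 : |g 0| ≤ √(g 0 ^ 2 + ‖v‖ ^ 2) := Real.abs_le_sqrt (by nlinarith [sq_nonneg ‖v‖])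
  have hv : ‖v‖ ≤ √(g 0 ^ 2 + ‖v‖ ^ 2) := Real.le_sqrt_of_sq_le (by nlinarith [sq_nonneg (g 0)])
  have hinc : |inner ℝ v (incrementRepr hw x)| ≤ √(g 0 ^ 2 + ‖v‖ ^ 2) * √x :=
    (abs_real_inner_le_norm _ _).trans
      (mul_le_mul hv (norm_incrementRepr_le hw hx) (norm_nonneg _) (Real.sqrt_nonneg _))
  calc |g x| = |g 0 + inner ℝ v (incrementRepr hw x)| := by
        rw [hg.inner_toL2_incrementRepr hw hx, add_sub_cancel]
    _ ≤ |g 0| + |inner ℝ v (incrementRepr hw x)| := abs_add_le _ _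
    _ ≤ (1 + √x) * wNorm w g d := by rw [hg.wNorm_eq hw]; linarith

end MemHw

namespace IsWeight

theorem memHw_primitive (hw : IsWeight w) {u : ℝ → ℝ} (hu : MemLp u 2 μ₊) :
    MemHw w (fun x => ∫ t in Ioc 0 x, u t / √(w t)) fun t => u t / √(w t) := by
  refine ⟨fun x _ => by simp, fun x _ => hw.integrableOn_div_sqrt hu x, hu.integrable_sq.congr ?_⟩
  filter_upwards [ae_restrict_mem measurableSet_Ioi] with y (hy : 0 < y)
  rw [div_pow, hw.sq_sqrt hy.le, mul_div_cancel₀ _ (zero_lt_one.trans_le (hw.one_le y hy.le)).ne']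

theorem toL2_memHw_primitive (hw : IsWeight w) (u : Lp ℝ 2 μ₊) :
    (hw.memHw_primitive (Lp.memLp u)).toL2 hw = u := by
  refine Lp.ext ?_
  filter_upwards [(hw.memHw_primitive (Lp.memLp u)).coeFn_toL2 hw,
    ae_restrict_mem measurableSet_Ioi] with y hy (hy0 : 0 < y)
  rw [hy, mul_div_cancel₀ _ (hw.sqrt_pos hy0.le).ne']

theorem wNorm_primitive (hw : IsWeight w) (u : Lp ℝ 2 μ₊) :
    wNorm w (fun x => ∫ t in Ioc 0 x, u t / √(w t)) (fun t => u t / √(w t)) = ‖u‖ := by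
  rw [(hw.memHw_primitive (Lp.memLp u)).wNorm_eq hw, hw.toL2_memHw_primitive]
  simp

theorem inner_toLp_div_sqrt_toL2 (hw : IsWeight w) {k g d : ℝ → ℝ}
    (hk : MemLp (fun y => k y / √(w y)) 2 μ₊) (hg : MemHw w g d) :
    inner ℝ hk.toLp (hg.toL2 hw) = ∫ y in Ioi 0, k y * d y := by
  rw [L2.inner_def]
  refine integral_congr_ae ?_
  filter_upwards [hk.coeFn_toLp, hg.coeFn_toL2 hw, ae_restrict_mem measurableSet_Ioi]
    with y hky hgy (hy : 0 < y)
  rw [RCLike.inner_apply, conj_trivial, hky, hgy]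
  field_simp [(hw.sqrt_pos hy.le).ne']

end IsWeight

theorem memLp_kernel_of_bounded (hw : IsWeight w) {q : ℝ → ℝ → ℝ}
    (hq : Measurable (Function.uncurry q)) {C : ℝ}
    (hC : ∀ f f' : ℝ → ℝ, MemHw w f f' →
      ∃ d : ℝ → ℝ, MemHw w (fun x => ∫ y in Ioi (0:ℝ), q x y * f' y) d ∧
        wNorm w (fun x => ∫ y in Ioi (0:ℝ), q x y * f' y) d ≤ C * wNorm w f f')
    {x : ℝ} (hx : 0 ≤ x) :
    MemLp (fun y => q x y / √(w y)) 2 μ₊ := by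
  refine memLp_two_of_integral_mul_le
    (hq.of_uncurry_left.aemeasurable.div hw.aemeasurable_sqrt).aestronglyMeasurable
    ((1 + √x) * C) fun u => ?_
  obtain ⟨d, hd, hbound⟩ := hC _ _ (hw.memHw_primitive (Lp.memLp u))
  calc ∫ y, q x y / √(w y) * u y ∂μ₊ = ∫ y in Ioi 0, q x y * (u y / √(w y)) :=
        integral_congr_ae (ae_of_all _ fun y => by ring)
    _ ≤ |∫ y in Ioi 0, q x y * (u y / √(w y))| := le_abs_self _
    _ ≤ (1 + √x) * wNorm w (fun x => ∫ y in Ioi 0, q x y * (u y / √(w y))) d :=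
        hd.abs_le_wNorm hw hx
    _ ≤ (1 + √x) * (C * ‖u‖) := by
        rw [← hw.wNorm_primitive u]; gcongr
    _ = (1 + √x) * C * ‖u‖ := by ring

theorem exists_bound_of_memLp_kernel (hw : IsWeight w) {q : ℝ → ℝ → ℝ}
    (hk : ∀ x ∈ Ici (0:ℝ), MemLp (fun y => q x y / √(w y)) 2 μ₊)
    (hT : ∀ f f' : ℝ → ℝ, MemHw w f f' →
      ∃ d : ℝ → ℝ, MemHw w (fun x => ∫ y in Ioi (0:ℝ), q x y * f' y) d) :
    ∃ C : ℝ, ∀ f f' d : ℝ → ℝ, MemHw w f f' →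
      MemHw w (fun x => ∫ y in Ioi (0:ℝ), q x y * f' y) d →
        wNorm w (fun x => ∫ y in Ioi (0:ℝ), q x y * f' y) d ≤ C * wNorm w f f' := by
  set k : Ici (0:ℝ) → Lp ℝ 2 μ₊ := fun x => (hk x x.2).toLp
  set k₀ := k ⟨0, self_mem_Ici⟩
  have hTk : ∀ {f f' : ℝ → ℝ} (hf : MemHw w f f') (x : Ici (0:ℝ)),
      ∫ y in Ioi 0, q x y * f' y = inner ℝ (k x) (hf.toL2 hw) :=
    fun hf x => (hw.inner_toLp_div_sqrt_toL2 (hk x x.2) hf).symm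
  have hinc : ∀ {f f' d : ℝ → ℝ} (hf : MemHw w f f')
      (hd : MemHw w (fun x => ∫ y in Ioi (0:ℝ), q x y * f' y) d) (x : Ici (0:ℝ)),
      inner ℝ (hd.toL2 hw) (incrementRepr hw x) = inner ℝ (k x - k₀) (hf.toL2 hw) :=
    fun hf hd x => by
      rw [hd.inner_toL2_incrementRepr hw x.2, inner_sub_left, hTk hf, ← hTk hf ⟨0, self_mem_Ici⟩]
  obtain ⟨L, hL⟩ := exists_continuousLinearMap_inner_eq (fun x : Ici (0:ℝ) => incrementRepr hw x)
    (fun x => k x - k₀)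
    (fun v hv => eq_zero_of_forall_inner_incrementRepr hw fun x hx => hv ⟨x, hx⟩) fun u => by
      have hu := hw.memHw_primitive (Lp.memLp u)
      obtain ⟨d, hd⟩ := hT _ _ hu
      exact ⟨hd.toL2 hw, fun x => by rw [hinc hu hd, hw.toL2_memHw_primitive]⟩
  refine ⟨√(‖k₀‖ ^ 2 + ‖L‖ ^ 2), fun f f' d hf hd => ?_⟩
  have h0 : |∫ y in Ioi 0, q 0 y * f' y| ≤ ‖k₀‖ * ‖hf.toL2 hw‖ := by
    rw [hTk hf ⟨0, self_mem_Ici⟩]; exact abs_real_inner_le_norm _ _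
  have hLu : ‖hd.toL2 hw‖ ≤ ‖L‖ * ‖hf.toL2 hw‖ := hL _ _ (hinc hf hd) ▸ L.le_opNorm _
  rw [hd.wNorm_eq hw, hf.wNorm_eq hw, ← Real.sqrt_mul (by positivity)]
  refine Real.sqrt_le_sqrt ?_
  have h0' := pow_le_pow_left₀ (abs_nonneg _) h0 2
  have hLu' := pow_le_pow_left₀ (norm_nonneg _) hLu 2
  rw [sq_abs] at h0'
  nlinarith [sq_nonneg (f 0), sq_nonneg ‖k₀‖, sq_nonneg ‖L‖, sq_nonneg ‖hf.toL2 hw‖]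

end Weighted

/-- the integral operator `Tf(x) = ∫₀^∞ q(x,y) f'(y) dy` is an
everywhere-defined continuous (bounded) linear operator on `H_w` if and only if
(1) `q(x,·)/√w ∈ L²(ℝ≥0)` for every `x ≥ 0`, and (2) for every `f ∈ H_w` the
function `x ↦ ∫₀^∞ q(x,y) f'(y) dy` belongs to `H_w`. -/
theorem stmt12 (w : ℝ → ℝ) (hw : IsWeight w)
    (q : ℝ → ℝ → ℝ) (hq : Measurable (Function.uncurry q)) :
    (∃ C : ℝ, ∀ f f' : ℝ → ℝ, MemHw w f f' →
      (∀ x ∈ Ici (0:ℝ),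
        Integrable (fun y => q x y * f' y) (volume.restrict (Ioi (0:ℝ)))) ∧
      ∃ d : ℝ → ℝ, MemHw w (fun x => ∫ y in Ioi (0:ℝ), q x y * f' y) d ∧
        wNorm w (fun x => ∫ y in Ioi (0:ℝ), q x y * f' y) d ≤ C * wNorm w f f') ↔
    ((∀ x ∈ Ici (0:ℝ),
        MemLp (fun y => q x y / Real.sqrt (w y)) 2 (volume.restrict (Ioi (0:ℝ)))) ∧
     (∀ f f' : ℝ → ℝ, MemHw w f f' →
      (∀ x ∈ Ici (0:ℝ),
        Integrable (fun y => q x y * f' y) (volume.restrict (Ioi (0:ℝ)))) ∧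
      ∃ d : ℝ → ℝ, MemHw w (fun x => ∫ y in Ioi (0:ℝ), q x y * f' y) d)) := by
  constructor
  · rintro ⟨C, hC⟩
    exact ⟨fun x hx => memLp_kernel_of_bounded hw hq (fun f f' hf => (hC f f' hf).2) hx,
      fun f f' hf => ⟨(hC f f' hf).1, (hC f f' hf).2.imp fun _ hd => hd.1⟩⟩
  · rintro ⟨hk, hT⟩
    obtain ⟨C, hC⟩ := exists_bound_of_memLp_kernel hw hk fun f f' hf => (hT f f' hf).2
    exact ⟨C, fun f f' hf =>
      ⟨(hT f f' hf).1, (hT f f' hf).2.imp fun d hd => ⟨hd, hC f f' d hf hd⟩⟩⟩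
end
end

section
/- Let X be a mean-zero square-integrable H_w-valued random variable with covariance operator Q. Define ρ(x,y) = E[X(x)X(y)]/√(E[X(x)²]E[X(y)²]) (set to 1 when the denominator vanishes), where X(x) = δ_x(X). Then for every x ≥ 0 there exists ε > 0 such that for all y with |x−y| ≤ ε: ρ(x,y) ≥ 1 − 2‖Q‖_op^{1/2}√|x−y| / (‖Q^{1/2} h_x‖_w + ‖Q‖_op^{1/2}√|x−y|). -/
/-!
Write `a = ‖Q^{1/2} h_x‖` and `d = ‖Q‖^{1/2} √|x - y|`. Since `‖Q^{1/2} g‖² = ⟪g, Q g⟫ ≤ ‖Q‖ ‖g‖²`,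
the Hölder bound gives `‖Q^{1/2} h_y - Q^{1/2} h_x‖ ≤ d`, and `E[X(x)X(y)] = ⟪Q^{1/2} h_x, Q^{1/2} h_y⟫`.
For two vectors `u ≠ 0`, `v` with `‖v - u‖ ≤ d ≤ ‖u‖` one has `⟪u, v⟫ ≥ ‖u‖ (‖u‖ - d)` and
`‖v‖ ≤ ‖u‖ + d`, so `⟪u, v⟫ / (‖u‖ ‖v‖) ≥ (‖u‖ - d) / (‖u‖ + d)`. Choosing `ε` so small that `d ≤ a`
gives the bound; when `a = 0` the correlation is `1` by convention.
-/
section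

variable {E : Type*} [NormedAddCommGroup E] [InnerProductSpace ℝ E]

theorem norm_apply_le_sqrt_opNorm_mul_norm {Q C : E →L[ℝ] E} (hQC : ∀ g, Q g = C (C g))
    (hCsym : ∀ g g' : E, inner ℝ (C g) g' = inner ℝ g (C g')) (g : E) :
    ‖C g‖ ≤ √‖Q‖ * ‖g‖ := by
  have hsq : ‖C g‖ ^ 2 ≤ ‖Q‖ * ‖g‖ ^ 2 :=
    calc ‖C g‖ ^ 2 = inner ℝ g (Q g) := by rw [← real_inner_self_eq_norm_sq, hCsym, hQC]
      _ ≤ ‖g‖ * ‖Q g‖ := real_inner_le_norm _ _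
      _ ≤ ‖g‖ * (‖Q‖ * ‖g‖) := by gcongr; exact Q.le_opNorm g
      _ = ‖Q‖ * ‖g‖ ^ 2 := by ring
  rw [← Real.sqrt_sq (norm_nonneg g), ← Real.sqrt_mul (norm_nonneg Q)]
  exact Real.le_sqrt_of_sq_le hsq

theorem one_sub_two_mul_div_le_inner_div_norm_mul_norm {u v : E} {d : ℝ} (hu : u ≠ 0)
    (huv : ‖v - u‖ ≤ d) (hd : d ≤ ‖u‖) :
    1 - 2 * d / (‖u‖ + d) ≤ inner ℝ u v / (‖u‖ * ‖v‖) := by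
  have hu₀ : 0 < ‖u‖ := norm_pos_iff.2 hu
  have hd₀ : 0 ≤ d := (norm_nonneg _).trans huv
  have hinner : ‖u‖ * (‖u‖ - d) ≤ inner ℝ u v :=
    calc ‖u‖ * (‖u‖ - d) ≤ ‖u‖ ^ 2 - ‖u‖ * ‖v - u‖ := by nlinarith
      _ ≤ inner ℝ u u + inner ℝ u (v - u) := by
        rw [real_inner_self_eq_norm_sq]
        linarith [neg_abs_le (inner ℝ u (v - u)), abs_real_inner_le_norm u (v - u)]
      _ = inner ℝ u v := by rw [inner_sub_right]; ring
  rcases (norm_nonneg v).eq_or_lt with hv | hv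
  · have hud : ‖u‖ = d := le_antisymm (by simpa [norm_eq_zero.1 hv.symm] using huv) hd
    rw [← hv, mul_zero, div_zero, ← hud, ← two_mul, div_self (by positivity), sub_self]
  calc 1 - 2 * d / (‖u‖ + d) = (‖u‖ - d) / (‖u‖ + d) := by field_simp; ring
    _ ≤ (‖u‖ - d) / ‖v‖ :=
      div_le_div_of_nonneg_left (sub_nonneg.2 hd) hv (norm_le_norm_add_norm_sub u v |>.trans
        (by rw [norm_sub_rev]; linarith))
    _ = ‖u‖ * (‖u‖ - d) / (‖u‖ * ‖v‖) := (mul_div_mul_left _ _ hu₀.ne').symm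
    _ ≤ inner ℝ u v / (‖u‖ * ‖v‖) := div_le_div_of_nonneg_right hinner (by positivity)

end

theorem sqrt_mul_sqrt_le_of_le_sq_div {q t a : ℝ} (hq : 0 ≤ q) (ha : 0 ≤ a)
    (ht : t ≤ a ^ 2 / (q + 1)) : √q * √t ≤ a := by
  rw [← Real.sqrt_mul hq, ← Real.sqrt_sq ha]
  apply Real.sqrt_le_sqrt
  calc q * t ≤ q * (a ^ 2 / (q + 1)) := by gcongr
    _ ≤ a ^ 2 := by rw [mul_div_assoc', div_le_iff₀ (by positivity)]; nlinarith [sq_nonneg a]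

/-- correlation lower bound.  Abstract version over any real
inner product space `H` (playing the role of `H_w`): `Q` is the covariance
operator of a mean-zero square-integrable `H_w`-valued random variable `X`,
`C = Q^{1/2}` its positive symmetric square root, `h x = h_x` the reproducing
kernels (so `X(x) = ⟨h_x, X⟩`, `E[X(x)X(y)] = ⟨Q h_x, h_y⟩`,
`E[X(x)²] = ‖C h_x‖²`), satisfying the Hölder bound `‖h_y − h_x‖ ≤ √|y−x|`.
Then for every `x ≥ 0` there is `ε > 0` such that for all `y ≥ 0` with
`|x−y| ≤ ε`:
`ρ(x,y) ≥ 1 − 2‖Q‖^{1/2}√|x−y| / (‖Q^{1/2}h_x‖ + ‖Q‖^{1/2}√|x−y|)`. -/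
theorem stmt15 {H : Type*} [NormedAddCommGroup H] [InnerProductSpace ℝ H]
    (Q C : H →L[ℝ] H)
    (hQC : ∀ g : H, Q g = C (C g))
    (hCsym : ∀ g h : H, (inner ℝ (C g) h : ℝ) = inner ℝ g (C h))
    (h : ℝ → H)
    (hHolder : ∀ x y : ℝ, 0 ≤ x → 0 ≤ y → ‖h y - h x‖ ≤ Real.sqrt |y - x|)
    (ρ : ℝ → ℝ → ℝ)
    (hρ : ∀ x y : ℝ, ρ x y =
      if ‖C (h x)‖ * ‖C (h y)‖ = 0 then 1
      else (inner ℝ (Q (h x)) (h y) : ℝ) / (‖C (h x)‖ * ‖C (h y)‖)) :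
    ∀ x : ℝ, 0 ≤ x → ∃ ε > (0:ℝ), ∀ y : ℝ, 0 ≤ y → |x - y| ≤ ε →
      1 - 2 * Real.sqrt ‖Q‖ * Real.sqrt |x - y| /
          (‖C (h x)‖ + Real.sqrt ‖Q‖ * Real.sqrt |x - y|) ≤ ρ x y := by
  intro x hx
  by_cases hx₀ : C (h x) = 0
  · refine ⟨1, one_pos, fun y _ _ => ?_⟩
    rw [hρ, if_pos (by simp [hx₀])]
    exact sub_le_self _ (by positivity)
  refine ⟨‖C (h x)‖ ^ 2 / (‖Q‖ + 1), by positivity, fun y hy hxy => ?_⟩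
  rw [hρ]
  split_ifs
  · exact sub_le_self _ (by positivity)
  have hdiff : ‖C (h y) - C (h x)‖ ≤ √‖Q‖ * √|x - y| := by
    rw [← map_sub, abs_sub_comm]
    exact (norm_apply_le_sqrt_opNorm_mul_norm hQC hCsym _).trans
      (mul_le_mul_of_nonneg_left (hHolder x y hx hy) (Real.sqrt_nonneg _))
  rw [hQC, hCsym, mul_assoc]
  exact one_sub_two_mul_div_le_inner_div_norm_mul_norm hx₀ hdiff
    (sqrt_mul_sqrt_le_of_le_sq_div (norm_nonneg Q) (norm_nonneg _) hxy)
end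

section
/- Let λ, T > 0 and define cut : ℝ → [0,T), x ↦ x − T·⌊x/T⌋, and A : L²([0,T),ℂ) → L²(ℝ≥0,ℂ), Af(x) = e^{−λx} f(cut(x)). Then A is a bounded linear operator with closed range, and for every f ∈ L²([0,T),ℂ): (e^{−2Tλ}/(1−e^{−2Tλ})) ‖f‖² ≤ ‖Af‖² ≤ (1/(1−e^{−2Tλ})) ‖f‖². -/
/-!
Split `(0, ∞)` into the periods `(nT, (n+1)T]`. On the `n`-th period `cut` is the translation by
`-nT` (off a null set), while the weight `e^{-2λx}` picks up the factor `ρ^n`, `ρ = e^{-2λT}`.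
Hence `‖Af‖² = (1 - ρ)⁻¹ ∫_{(0,T]} e^{-2λy} |f y|² dy`, and `ρ ≤ e^{-2λy} ≤ 1` on `(0, T]` gives
both bounds. The lower bound makes `A` antilipschitz, so its range is complete, hence closed.
-/

open MeasureTheory Set
open scoped ENNReal

noncomputable section

def cut (T x : ℝ) : ℝ := x - T * ⌊x / T⌋

section Cut

variable {T : ℝ}

lemma measurable_cut : Measurable (cut T) := by
  unfold cut; fun_prop

lemma cut_eq_toIcoMod (hT : 0 < T) (x : ℝ) : cut T x = toIcoMod hT 0 x := by
  rw [cut, toIcoMod, toIcoDiv_eq_floor, sub_zero, zsmul_eq_mul, mul_comm]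

lemma cut_add_nat_mul (hT : 0 < T) {y : ℝ} (hy : y ∈ Ico 0 T) (n : ℕ) :
    cut T (y + n * T) = y := by
  rw [cut_eq_toIcoMod hT, ← nsmul_eq_mul, toIcoMod_add_nsmul, toIcoMod_eq_self, zero_add]
  exact hy

lemma ae_restrict_Ioc_cut_add_nat_mul (hT : 0 < T) :
    ∀ᵐ y ∂volume.restrict (Ioc 0 T), ∀ n : ℕ, cut T (y + n * T) = y := by
  rw [← Measure.restrict_congr_set Ico_ae_eq_Ioc]
  filter_upwards [ae_restrict_mem measurableSet_Ico] with y hy n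
  exact cut_add_nat_mul hT hy n

lemma lintegral_Ioi_eq_tsum_Ioc (hT : 0 < T) (F : ℝ → ℝ≥0∞) :
    ∫⁻ x in Ioi 0, F x = ∑' n : ℕ, ∫⁻ y in Ioc 0 T, F (y + n * T) := by
  have hmono : Monotone fun n : ℕ => (n : ℝ) * T := fun m n h => by
    dsimp only; gcongr
  have hunbdd : ¬BddAbove (range fun n : ℕ => (n : ℝ) * T) := by
    rintro ⟨b, hb⟩
    obtain ⟨n, hn⟩ := exists_nat_gt (b / T)
    have := hb ⟨n, rfl⟩
    rw [div_lt_iff₀ hT] at hn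
    linarith
  have hunion : (⋃ n : ℕ, Ioc ((n : ℝ) * T) ((n + 1 : ℕ) * T)) = Ioi 0 := by
    simpa using iUnion_Ioc_map_succ_eq_Ioi (fun n => hmono (Nat.zero_le n)) hunbdd
  have htranslate (n : ℕ) :
      ∫⁻ y in Ioc 0 T, F (y + n * T) = ∫⁻ x in Ioc ((n : ℝ) * T) ((n + 1 : ℕ) * T), F x := by
    rw [(measurePreserving_add_right volume _).setLIntegral_comp_emb
      (measurableEmbedding_addRight _), image_add_const_Ioc]
    push_cast; ring_nf
  simp_rw [htranslate, ← hunion]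
  exact lintegral_iUnion (fun _ => measurableSet_Ioc) hmono.pairwise_disjoint_on_Ioc_succ F

lemma ofReal_exp_neg_mul_add_nat_mul (c y : ℝ) (n : ℕ) :
    ENNReal.ofReal (Real.exp (-(c * (y + n * T))))
      = ENNReal.ofReal (Real.exp (-(c * T))) ^ n * ENNReal.ofReal (Real.exp (-(c * y))) := by
  rw [← ENNReal.ofReal_pow (Real.exp_nonneg _), ← ENNReal.ofReal_mul (by positivity),
    ← Real.exp_nat_mul, ← Real.exp_add]
  ring_nf

lemma lintegral_Ioi_exp_mul_comp_cut (hT : 0 < T) (c : ℝ) (g : ℝ → ℝ≥0∞) :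
    ∫⁻ x in Ioi 0, ENNReal.ofReal (Real.exp (-(c * x))) * g (cut T x)
      = (1 - ENNReal.ofReal (Real.exp (-(c * T))))⁻¹ *
          ∫⁻ y in Ioc 0 T, ENNReal.ofReal (Real.exp (-(c * y))) * g y := by
  have hterm (n : ℕ) :
      ∫⁻ y in Ioc 0 T, ENNReal.ofReal (Real.exp (-(c * (y + n * T)))) * g (cut T (y + n * T))
        = ENNReal.ofReal (Real.exp (-(c * T))) ^ n *
            ∫⁻ y in Ioc 0 T, ENNReal.ofReal (Real.exp (-(c * y))) * g y := by
    rw [← lintegral_const_mul' _ _ (by finiteness)]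
    refine lintegral_congr_ae ?_
    filter_upwards [ae_restrict_Ioc_cut_add_nat_mul hT] with y hy
    rw [hy n, ofReal_exp_neg_mul_add_nat_mul, mul_assoc]
  rw [lintegral_Ioi_eq_tsum_Ioc hT, tsum_congr hterm, ENNReal.tsum_mul_right,
    ENNReal.tsum_geometric]

lemma setLIntegral_Ioc_exp_mul_le {c : ℝ} (hc : 0 ≤ c) (g : ℝ → ℝ≥0∞) :
    ∫⁻ y in Ioc 0 T, ENNReal.ofReal (Real.exp (-(c * y))) * g y ≤ ∫⁻ y in Ioc 0 T, g y := by
  refine setLIntegral_mono_ae' measurableSet_Ioc (Filter.Eventually.of_forall fun y hy => ?_)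
  refine mul_le_of_le_one_left' (ENNReal.ofReal_le_one.2 (Real.exp_le_one_iff.2 ?_))
  nlinarith [hy.1]

lemma le_setLIntegral_Ioc_exp_mul {c : ℝ} (hc : 0 ≤ c) (g : ℝ → ℝ≥0∞) :
    ENNReal.ofReal (Real.exp (-(c * T))) * ∫⁻ y in Ioc 0 T, g y
      ≤ ∫⁻ y in Ioc 0 T, ENNReal.ofReal (Real.exp (-(c * y))) * g y := by
  rw [← lintegral_const_mul' _ _ ENNReal.ofReal_ne_top]
  refine setLIntegral_mono_ae' measurableSet_Ioc (Filter.Eventually.of_forall fun y hy => ?_)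
  gcongr
  nlinarith [hy.2]

lemma map_cut_absolutelyContinuous (hT : 0 < T) :
    (volume.restrict (Ioi 0)).map (cut T) ≪ volume.restrict (Ioc 0 T) := by
  refine Measure.AbsolutelyContinuous.mk fun s hs hs0 => ?_
  -- with `c = 0` the factor `(1 - 1)⁻¹ = ∞` multiplies `∫⁻ y in Ioc 0 T, s.indicator 1 y = 0`
  have h := lintegral_Ioi_exp_mul_comp_cut hT 0 (s.indicator 1)
  simp only [zero_mul, neg_zero, Real.exp_zero, ENNReal.ofReal_one, one_mul] at h
  rw [Measure.map_apply measurable_cut hs, ← lintegral_indicator_one (measurable_cut hs)]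
  simp only [lintegral_indicator_one hs, hs0, mul_zero] at h
  exact h

lemma ae_eq_comp_cut (hT : 0 < T) {E : Type*} {u v : ℝ → E}
    (h : u =ᵐ[volume.restrict (Ioc 0 T)] v) :
    u ∘ cut T =ᵐ[volume.restrict (Ioi 0)] v ∘ cut T :=
  ae_eq_comp measurable_cut.aemeasurable ((map_cut_absolutelyContinuous hT).ae_le h)

lemma MeasureTheory.AEStronglyMeasurable.comp_cut (hT : 0 < T) {E : Type*} [TopologicalSpace E]
    {u : ℝ → E} (hu : AEStronglyMeasurable u (volume.restrict (Ioc 0 T))) :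
    AEStronglyMeasurable (u ∘ cut T) (volume.restrict (Ioi 0)) :=
  (hu.mono_ac (map_cut_absolutelyContinuous hT)).comp_aemeasurable measurable_cut.aemeasurable

end Cut

lemma MeasureTheory.eLpNorm_two_sq {α E : Type*} [MeasurableSpace α] [NormedAddCommGroup E]
    (μ : Measure α) (f : α → E) : eLpNorm f 2 μ ^ 2 = ∫⁻ x, ‖f x‖ₑ ^ 2 ∂μ := by
  simpa using eLpNorm_nnreal_pow_eq_lintegral (f := f) (μ := μ) (p := 2) two_ne_zero

lemma MeasureTheory.Lp.norm_sq_eq_toReal_lintegral {α E : Type*} [MeasurableSpace α]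
    [NormedAddCommGroup E] {μ : Measure α} (f : Lp E 2 μ) :
    ‖f‖ ^ 2 = (∫⁻ x, ‖f x‖ₑ ^ 2 ∂μ).toReal := by
  rw [Lp.norm_def, ← ENNReal.toReal_pow, eLpNorm_two_sq]

lemma le_sqrt_mul_of_sq_le_mul_sq {a b c : ℝ} (hb : 0 ≤ b) (h : a ^ 2 ≤ c * b ^ 2) :
    a ≤ √c * b := by
  rw [← Real.sqrt_sq hb, ← Real.sqrt_mul' c (sq_nonneg b)]
  exact Real.le_sqrt_of_sq_le h

lemma ContinuousLinearMap.isClosed_range_of_mul_norm_sq_le {𝕜 E F : Type*}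
    [NontriviallyNormedField 𝕜] [NormedAddCommGroup E] [NormedSpace 𝕜 E] [CompleteSpace E]
    [NormedAddCommGroup F] [NormedSpace 𝕜 F] (A : E →L[𝕜] F) {c : ℝ} (hc : 0 < c)
    (h : ∀ x, c * ‖x‖ ^ 2 ≤ ‖A x‖ ^ 2) : IsClosed (range A) := by
  refine (A.antilipschitz_of_bound (K := (√c⁻¹).toNNReal) fun x => ?_).isClosed_range
    A.uniformContinuous
  rw [Real.coe_toNNReal _ (Real.sqrt_nonneg _)]
  exact le_sqrt_mul_of_sq_le_mul_sq (norm_nonneg _) ((le_inv_mul_iff₀ hc).2 (h x))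

lemma enorm_cexp_neg_mul_sq (lam x : ℝ) :
    ‖Complex.exp (-(lam : ℂ) * x)‖ₑ ^ 2 = ENNReal.ofReal (Real.exp (-(2 * lam * x))) := by
  rw [← ofReal_norm, Complex.norm_exp, ← ENNReal.ofReal_pow (Real.exp_nonneg _),
    ← Real.exp_nat_mul]
  congr 2
  simp only [neg_mul, Complex.neg_re, Complex.re_ofReal_mul, Complex.ofReal_re]
  push_cast
  ring

def dampedPeriodic (lam T : ℝ) (u : ℝ → ℂ) (x : ℝ) : ℂ :=
  Complex.exp (-(lam : ℂ) * x) * u (cut T x)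

section DampedPeriodic

variable {lam T : ℝ}

lemma dampedPeriodic_add (u v : ℝ → ℂ) :
    dampedPeriodic lam T (u + v) = dampedPeriodic lam T u + dampedPeriodic lam T v := by
  ext x; simp only [dampedPeriodic, Pi.add_apply, mul_add]

lemma dampedPeriodic_smul (a : ℂ) (u : ℝ → ℂ) :
    dampedPeriodic lam T (a • u) = a • dampedPeriodic lam T u := by
  ext x; simp only [dampedPeriodic, Pi.smul_apply, smul_eq_mul]; ring

lemma dampedPeriodic_congr_ae (hT : 0 < T) {u v : ℝ → ℂ}
    (h : u =ᵐ[volume.restrict (Ioc 0 T)] v) :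
    dampedPeriodic lam T u =ᵐ[volume.restrict (Ioi 0)] dampedPeriodic lam T v := by
  filter_upwards [ae_eq_comp_cut hT h] with x hx
  simp only [dampedPeriodic, ← Function.comp_apply (f := u), hx, Function.comp_apply]

lemma eLpNorm_dampedPeriodic_sq (hT : 0 < T) (u : ℝ → ℂ) :
    eLpNorm (dampedPeriodic lam T u) 2 (volume.restrict (Ioi 0)) ^ 2
      = (1 - ENNReal.ofReal (Real.exp (-(2 * lam * T))))⁻¹ *
          ∫⁻ y in Ioc 0 T, ENNReal.ofReal (Real.exp (-(2 * lam * y))) * ‖u y‖ₑ ^ 2 := by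
  rw [eLpNorm_two_sq, ← lintegral_Ioi_exp_mul_comp_cut hT]
  simp only [dampedPeriodic, enorm_mul, mul_pow, enorm_cexp_neg_mul_sq]

lemma memLp_dampedPeriodic (hlam : 0 < lam) (hT : 0 < T) {u : ℝ → ℂ}
    (hu : MemLp u 2 (volume.restrict (Ioc 0 T))) :
    MemLp (dampedPeriodic lam T u) 2 (volume.restrict (Ioi 0)) := by
  have hexp : Continuous fun x : ℝ => Complex.exp (-(lam : ℂ) * x) := by fun_prop
  refine ⟨hexp.aestronglyMeasurable.mul (hu.aestronglyMeasurable.comp_cut hT), ?_⟩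
  have hρ : ENNReal.ofReal (Real.exp (-(2 * lam * T))) < 1 :=
    ENNReal.ofReal_lt_one.2 (Real.exp_lt_one_iff.2 (by nlinarith))
  have hu2 : ∫⁻ y in Ioc 0 T, ‖u y‖ₑ ^ 2 < ⊤ := by
    rw [← eLpNorm_two_sq]; exact ENNReal.pow_lt_top hu.2
  rw [← ENNReal.pow_lt_top_iff (n := 2) |>.trans (or_iff_left two_ne_zero),
    eLpNorm_dampedPeriodic_sq hT]
  exact ENNReal.mul_lt_top (ENNReal.inv_lt_top.2 (tsub_pos_of_lt hρ))
    ((setLIntegral_Ioc_exp_mul_le (by positivity) _).trans_lt hu2)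

def dampedPeriodicₗ (hlam : 0 < lam) (hT : 0 < T) :
    Lp ℂ 2 (volume.restrict (Ioc (0 : ℝ) T)) →ₗ[ℂ] Lp ℂ 2 (volume.restrict (Ioi (0 : ℝ))) where
  toFun f := (memLp_dampedPeriodic hlam hT (Lp.memLp f)).toLp
  map_add' f g := by
    rw [← MemLp.toLp_add]
    refine MemLp.toLp_congr _ _ ?_
    rw [← dampedPeriodic_add]
    exact dampedPeriodic_congr_ae hT (Lp.coeFn_add f g)
  map_smul' a f := by
    rw [RingHom.id_apply, ← MemLp.toLp_const_smul]
    refine MemLp.toLp_congr _ _ ?_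
    rw [← dampedPeriodic_smul]
    exact dampedPeriodic_congr_ae hT (Lp.coeFn_smul a f)

lemma coeFn_dampedPeriodicₗ (hlam : 0 < lam) (hT : 0 < T)
    (f : Lp ℂ 2 (volume.restrict (Ioc (0 : ℝ) T))) :
    dampedPeriodicₗ hlam hT f =ᵐ[volume.restrict (Ioi 0)] dampedPeriodic lam T f :=
  MemLp.coeFn_toLp (memLp_dampedPeriodic hlam hT (Lp.memLp f))

lemma norm_dampedPeriodicₗ_sq (hlam : 0 < lam) (hT : 0 < T)
    (f : Lp ℂ 2 (volume.restrict (Ioc (0 : ℝ) T))) :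
    ‖dampedPeriodicₗ hlam hT f‖ ^ 2 = (1 - Real.exp (-(2 * lam * T)))⁻¹ *
      (∫⁻ y in Ioc 0 T, ENNReal.ofReal (Real.exp (-(2 * lam * y))) * ‖f y‖ₑ ^ 2).toReal := by
  have hρ : Real.exp (-(2 * lam * T)) ≤ 1 := Real.exp_le_one_iff.2 (by nlinarith)
  rw [dampedPeriodicₗ, LinearMap.coe_mk, AddHom.coe_mk, Lp.norm_toLp, ← ENNReal.toReal_pow,
    eLpNorm_dampedPeriodic_sq hT, ENNReal.toReal_mul, ENNReal.toReal_inv,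
    ENNReal.toReal_sub_of_le (ENNReal.ofReal_le_one.2 hρ) ENNReal.one_ne_top,
    ENNReal.toReal_ofReal (Real.exp_nonneg _), ENNReal.toReal_one]

lemma norm_dampedPeriodicₗ_sq_bounds (hlam : 0 < lam) (hT : 0 < T)
    (f : Lp ℂ 2 (volume.restrict (Ioc (0 : ℝ) T))) :
    Real.exp (-(2 * T * lam)) / (1 - Real.exp (-(2 * T * lam))) * ‖f‖ ^ 2
        ≤ ‖dampedPeriodicₗ hlam hT f‖ ^ 2 ∧
      ‖dampedPeriodicₗ hlam hT f‖ ^ 2 ≤ 1 / (1 - Real.exp (-(2 * T * lam))) * ‖f‖ ^ 2 := by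
  have hc : 0 ≤ 2 * lam := by positivity
  have hf : ∫⁻ y in Ioc 0 T, ‖f y‖ₑ ^ 2 ≠ ⊤ := by
    rw [← eLpNorm_two_sq]; exact ENNReal.pow_ne_top (Lp.eLpNorm_ne_top f)
  have hupper := ENNReal.toReal_mono hf (setLIntegral_Ioc_exp_mul_le hc fun y => ‖f y‖ₑ ^ 2)
  have hlower := ENNReal.toReal_mono (ne_top_of_le_ne_top hf (setLIntegral_Ioc_exp_mul_le hc _))
    (le_setLIntegral_Ioc_exp_mul (T := T) hc fun y => ‖f y‖ₑ ^ 2)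
  rw [ENNReal.toReal_mul, ENNReal.toReal_ofReal (Real.exp_nonneg _)] at hlower
  have hρ : Real.exp (-(2 * lam * T)) < 1 := Real.exp_lt_one_iff.2 (by nlinarith)
  rw [norm_dampedPeriodicₗ_sq, Lp.norm_sq_eq_toReal_lintegral, mul_right_comm 2 T lam,
    div_eq_inv_mul, one_div, mul_assoc]
  have hinv : 0 ≤ (1 - Real.exp (-(2 * lam * T)))⁻¹ := inv_nonneg.2 (by linarith)
  exact ⟨mul_le_mul_of_nonneg_left hlower hinv, mul_le_mul_of_nonneg_left hupper hinv⟩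

end DampedPeriodic

/-- with `cut x = x − T⌊x/T⌋`, the map
`Af(x) = e^{−λx} f(cut x)` defines a bounded linear operator
`A : L²((0,T], ℂ) → L²((0,∞), ℂ)` with closed range, satisfying
`(e^{−2Tλ}/(1−e^{−2Tλ})) ‖f‖² ≤ ‖Af‖² ≤ (1/(1−e^{−2Tλ})) ‖f‖²`. -/
theorem stmt17 (lam T : ℝ) (hlam : 0 < lam) (hT : 0 < T) :
    ∃ A : Lp ℂ 2 (volume.restrict (Ioc (0:ℝ) T)) →L[ℂ]
        Lp ℂ 2 (volume.restrict (Ioi (0:ℝ))),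
      (∀ f : Lp ℂ 2 (volume.restrict (Ioc (0:ℝ) T)),
        (A f : ℝ → ℂ) =ᵐ[volume.restrict (Ioi (0:ℝ))]
          fun x => Complex.exp (-(lam : ℂ) * (x : ℂ)) *
            (f : ℝ → ℂ) (x - T * (⌊x / T⌋ : ℤ))) ∧
      IsClosed (Set.range A) ∧
      ∀ f : Lp ℂ 2 (volume.restrict (Ioc (0:ℝ) T)),
        (Real.exp (-(2 * T * lam)) / (1 - Real.exp (-(2 * T * lam)))) * ‖f‖ ^ 2 ≤
            ‖A f‖ ^ 2 ∧
        ‖A f‖ ^ 2 ≤ (1 / (1 - Real.exp (-(2 * T * lam)))) * ‖f‖ ^ 2 := by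
  have hρ : 0 < Real.exp (-(2 * T * lam)) ∧ Real.exp (-(2 * T * lam)) < 1 :=
    ⟨Real.exp_pos _, Real.exp_lt_one_iff.2 (by nlinarith)⟩
  let A := (dampedPeriodicₗ hlam hT).mkContinuous _ fun f =>
    le_sqrt_mul_of_sq_le_mul_sq (norm_nonneg f) (norm_dampedPeriodicₗ_sq_bounds hlam hT f).2
  refine ⟨A, coeFn_dampedPeriodicₗ hlam hT, ?_, norm_dampedPeriodicₗ_sq_bounds hlam hT⟩
  exact A.isClosed_range_of_mul_norm_sq_le (div_pos hρ.1 (sub_pos.2 hρ.2))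
    fun f => (norm_dampedPeriodicₗ_sq_bounds hlam hT f).1
end
end
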